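/- arXiv:2508.07370 — 9 statements merged into one kernel-verified Lean document; each statement's English description precedes it below -/
import Mathlib

section
/- Let L ≥ 2, let n_0, n_1, …, n_L be positive integers, and let f : ℝ^{n_L × n_0} → ℝ be continuously differentiable. Define ℓ(U_L, …, U_1) := f(U_L ⋯ U_1) for matrices U_i ∈ ℝ^{n_i × n_{i−1}}. If t ↦ (U_L(t), …, U_1(t)) is a differentiable curve on [0,T) satisfying the gradient flow U_i'(t) = −∂ℓ/∂U_i(U_L(t), …, U_1(t)) for each i and all t, then for every i ∈ {1, …, L−1} the matrix U_{i+1}(t)^⊤ U_{i+1}(t) − U_i(t) U_i(t)^⊤ is constant in t, i.e. equal to its value at t = 0 for all t ∈ [0,T). -/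
open scoped Matrix

attribute [local instance] Matrix.normedAddCommGroup Matrix.normedSpace

/-- The matrices `U_i` (for `0 ≤ i < L`) encoded in a Euclidean parameter vector. -/
noncomputable def layerMatrix (L : ℕ) (n : ℕ → ℕ)
    (θ : EuclideanSpace ℝ ((i : Fin L) × (Fin (n (i + 1)) × Fin (n i)))) (i : Fin L) :
    Matrix (Fin (n (i + 1))) (Fin (n i)) ℝ :=
  Matrix.of fun a b => θ ⟨i, a, b⟩

/-- `prefixProd n U j = U (j-1) * ⋯ * U 1 * U 0 : Matrix (Fin (n j)) (Fin (n 0)) ℝ`. -/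
noncomputable def prefixProd (n : ℕ → ℕ)
    (U : ∀ i : ℕ, Matrix (Fin (n (i + 1))) (Fin (n i)) ℝ) :
    ∀ j : ℕ, Matrix (Fin (n j)) (Fin (n 0)) ℝ
  | 0 => 1
  | j + 1 => U j * prefixProd n U j

/-- The matrices of a parameter vector, extended by zero beyond the first `L` layers. -/
noncomputable def layerMatrixExt (L : ℕ) (n : ℕ → ℕ)
    (θ : EuclideanSpace ℝ ((i : Fin L) × (Fin (n (i + 1)) × Fin (n i)))) (i : ℕ) :
    Matrix (Fin (n (i + 1))) (Fin (n i)) ℝ :=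
  if h : i < L then layerMatrix L n θ ⟨i, h⟩ else 0

/-! The loss depends on the layers only through their product, so it does not change when a
factor `1 + t • X` is moved from the right of `U (i + 1)` to the left of `U i`. Differentiating at
`t = 0` gives `⟪∇ℓ, U (i + 1) * X⟫ = ⟪∇ℓ, X * U i⟫` (each taken in the corresponding layer) for
every `X`, that is `(∇_{i+1} ℓ)ᵀ * U (i + 1) = U i * (∇_i ℓ)ᵀ =: K`. Along the gradient flow the
derivative of `U (i + 1)ᵀ * U (i + 1) - U i * U iᵀ` is then `-(K + Kᵀ) + (Kᵀ + K) = 0`. -/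

section MatrixCalculus

variable {𝕜 : Type*} [NontriviallyNormedField 𝕜] [CompleteSpace 𝕜] {l m p : Type*}
  [Fintype l] [Fintype m] [Fintype p] {A : 𝕜 → Matrix l m 𝕜} {B : 𝕜 → Matrix m p 𝕜}
  {A' : Matrix l m 𝕜} {B' : Matrix m p 𝕜} {s : Set 𝕜} {x : 𝕜}

theorem HasDerivWithinAt.matrix_mul (hA : HasDerivWithinAt A A' s x)
    (hB : HasDerivWithinAt B B' s x) :
    HasDerivWithinAt (fun y => A y * B y) (A' * B x + A x * B') s x := by
  let mulCLM : Matrix l m 𝕜 →L[𝕜] Matrix m p 𝕜 →L[𝕜] Matrix l p 𝕜 :=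
    LinearMap.toContinuousLinearMap
      (LinearMap.toContinuousLinearMap.toLinearMap ∘ₗ mulLinearMap 𝕜)
  rw [add_comm]
  exact mulCLM.hasDerivWithinAt_of_bilinear hA hB

theorem HasDerivWithinAt.matrix_transpose (hA : HasDerivWithinAt A A' s x) :
    HasDerivWithinAt (fun y => (A y)ᵀ) A'ᵀ s x :=
  (Matrix.transposeLinearEquiv l m 𝕜 𝕜).toLinearMap.toContinuousLinearMap.hasFDerivAt
    |>.comp_hasDerivWithinAt x hA

end MatrixCalculus

theorem Convex.eq_of_hasDerivWithinAt_zero {E : Type*} [NormedAddCommGroup E] [NormedSpace ℝ E]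
    {f : ℝ → E} {s : Set ℝ} (hs : Convex ℝ s) (hf : ∀ x ∈ s, HasDerivWithinAt f 0 s x)
    {x y : ℝ} (hx : x ∈ s) (hy : y ∈ s) : f y = f x := by
  have := hs.norm_image_sub_le_of_norm_hasDerivWithin_le hf (fun _ _ => norm_zero.le) hx hy
  rwa [zero_mul, norm_le_zero_iff, sub_eq_zero] at this

theorem fderiv_apply_eq_of_forall_add_smul_eq {𝕜 E F : Type*} [NontriviallyNormedField 𝕜]
    [NormedAddCommGroup E] [NormedSpace 𝕜 E] [NormedAddCommGroup F] [NormedSpace 𝕜 F]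
    {g : E → F} {x v w : E} (h : ∀ t : 𝕜, g (x + t • v) = g (x + t • w)) :
    fderiv 𝕜 g x v = fderiv 𝕜 g x w := by
  by_cases hg : DifferentiableAt 𝕜 g x
  · rw [← hg.lineDeriv_eq_fderiv, ← hg.lineDeriv_eq_fderiv, lineDeriv, lineDeriv]
    simp_rw [h]
  · simp [fderiv_zero_of_not_differentiableAt hg]

section Network

variable {L : ℕ} {n : ℕ → ℕ}

theorem prefixProd_congr {U V : ∀ i : ℕ, Matrix (Fin (n (i + 1))) (Fin (n i)) ℝ} {m : ℕ}
    (h : ∀ k < m, U k = V k) : prefixProd n U m = prefixProd n V m := by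
  induction m with
  | zero => rfl
  | succ m ih =>
    simp only [prefixProd, h m m.lt_succ_self, ih fun k hk => h k (hk.trans m.lt_succ_self)]

theorem prefixProd_eq_of_mul_eq {U V : ∀ i : ℕ, Matrix (Fin (n (i + 1))) (Fin (n i)) ℝ} {i : ℕ}
    (hUV : ∀ k, k ≠ i → k ≠ i + 1 → U k = V k) (hmul : U (i + 1) * U i = V (i + 1) * V i)
    {m : ℕ} (hm : i + 2 ≤ m) : prefixProd n U m = prefixProd n V m := by
  induction m, hm using Nat.le_induction with
  | base =>
    have hbelow : prefixProd n U i = prefixProd n V i :=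
      prefixProd_congr fun k hk => hUV k hk.ne (by omega)
    simp only [prefixProd, ← Matrix.mul_assoc, hmul, hbelow]
  | succ m hm ih => simp only [prefixProd, ih, hUV m (by omega) (by omega)]

variable (L n) in
noncomputable def layerCLM (j : Fin L) :
    EuclideanSpace ℝ ((i : Fin L) × (Fin (n (i + 1)) × Fin (n i))) →L[ℝ]
      Matrix (Fin (n (j + 1))) (Fin (n j)) ℝ :=
  LinearMap.toContinuousLinearMap
    { toFun := fun θ => layerMatrix L n θ j
      map_add' := fun _ _ => rfl
      map_smul' := fun _ _ => rfl }

noncomputable def layerSingle (j : Fin L) (M : Matrix (Fin (n (j + 1))) (Fin (n j)) ℝ) :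
    EuclideanSpace ℝ ((i : Fin L) × (Fin (n (i + 1)) × Fin (n i))) :=
  WithLp.toLp 2 fun s =>
    (Pi.single j (fun p => M p.1 p.2) : ∀ k : Fin L, Fin (n (k + 1)) × Fin (n k) → ℝ) s.1 s.2

theorem layerMatrixExt_add_smul_layerSingle
    (θ : EuclideanSpace ℝ ((i : Fin L) × (Fin (n (i + 1)) × Fin (n i)))) {j : ℕ} (hj : j < L)
    (M : Matrix (Fin (n (j + 1))) (Fin (n j)) ℝ) (t : ℝ) (k : ℕ) :
    layerMatrixExt L n (θ + t • layerSingle ⟨j, hj⟩ M) k =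
      layerMatrixExt L n θ k +
        t • (Pi.single j M : ∀ k : ℕ, Matrix (Fin (n (k + 1))) (Fin (n k)) ℝ) k := by
  unfold layerMatrixExt
  split_ifs with hk
  · by_cases hkj : k = j
    · subst hkj
      ext a b
      simp [layerMatrix, layerSingle]
    · have hne : (⟨k, hk⟩ : Fin L) ≠ ⟨j, hj⟩ := fun h => hkj (Fin.mk.inj h)
      ext a b
      simp [layerMatrix, layerSingle, Pi.single_eq_of_ne hkj, Pi.single_eq_of_ne hne]
  · simp [Pi.single_eq_of_ne (show k ≠ j by omega)]

theorem inner_layerSingle (g : EuclideanSpace ℝ ((i : Fin L) × (Fin (n (i + 1)) × Fin (n i))))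
    (j : Fin L) (M : Matrix (Fin (n (j + 1))) (Fin (n j)) ℝ) :
    inner ℝ g (layerSingle j M) = ((layerMatrix L n g j)ᵀ * M).trace := by
  simp only [layerSingle, PiLp.inner_apply, RCLike.inner_apply, Real.ringHom_apply,
    Fintype.sum_sigma, Fintype.sum_prod_type, Matrix.trace, layerMatrix, Matrix.diag_apply,
    Matrix.mul_apply, Matrix.transpose_apply, Matrix.of_apply]
  rw [Fintype.sum_eq_single j fun k hk => by simp [Pi.single_eq_of_ne hk], Finset.sum_comm]
  simp [mul_comm]

theorem layerMatrixExt_of_lt (θ : EuclideanSpace ℝ ((i : Fin L) × (Fin (n (i + 1)) × Fin (n i))))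
    {i : ℕ} (hi : i < L) : layerMatrixExt L n θ i = layerMatrix L n θ ⟨i, hi⟩ :=
  dif_pos hi

theorem prefixProd_add_smul_layerSingle_mul_comm
    (θ : EuclideanSpace ℝ ((i : Fin L) × (Fin (n (i + 1)) × Fin (n i)))) {i : ℕ} (hi : i + 1 < L)
    (X : Matrix (Fin (n (i + 1))) (Fin (n (i + 1))) ℝ) (t : ℝ) :
    prefixProd n (layerMatrixExt L n
        (θ + t • layerSingle ⟨i + 1, hi⟩ (layerMatrix L n θ ⟨i + 1, hi⟩ * X))) L =
      prefixProd n (layerMatrixExt L n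
        (θ + t • layerSingle ⟨i, i.lt_succ_self.trans hi⟩
          (X * layerMatrix L n θ ⟨i, i.lt_succ_self.trans hi⟩))) L := by
  refine prefixProd_eq_of_mul_eq (i := i) (fun k hk hk' => ?_) ?_ (by omega)
  · rw [layerMatrixExt_add_smul_layerSingle, layerMatrixExt_add_smul_layerSingle,
      Pi.single_eq_of_ne hk, Pi.single_eq_of_ne hk']
  · rw [layerMatrixExt_add_smul_layerSingle, layerMatrixExt_add_smul_layerSingle,
      layerMatrixExt_add_smul_layerSingle, layerMatrixExt_add_smul_layerSingle,
      Pi.single_eq_same, Pi.single_eq_same, Pi.single_eq_of_ne i.succ_ne_self.symm,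
      Pi.single_eq_of_ne i.succ_ne_self, smul_zero, smul_zero, add_zero, add_zero,
      layerMatrixExt_of_lt θ hi, layerMatrixExt_of_lt θ (i.lt_succ_self.trans hi)]
    simp only [Matrix.add_mul, Matrix.mul_add, Matrix.mul_assoc, Matrix.smul_mul, Matrix.mul_smul]

variable (L n) in
noncomputable def networkLoss (f : Matrix (Fin (n L)) (Fin (n 0)) ℝ → ℝ)
    (θ : EuclideanSpace ℝ ((i : Fin L) × (Fin (n (i + 1)) × Fin (n i)))) : ℝ :=
  f (prefixProd n (layerMatrixExt L n θ) L)

theorem gradient_layer_transpose_mul_eq (f : Matrix (Fin (n L)) (Fin (n 0)) ℝ → ℝ)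
    (θ : EuclideanSpace ℝ ((i : Fin L) × (Fin (n (i + 1)) × Fin (n i)))) {i : ℕ} (hi : i + 1 < L) :
    (layerMatrix L n (gradient (networkLoss L n f) θ) ⟨i + 1, hi⟩)ᵀ *
        layerMatrix L n θ ⟨i + 1, hi⟩ =
      layerMatrix L n θ ⟨i, i.lt_succ_self.trans hi⟩ *
        (layerMatrix L n (gradient (networkLoss L n f) θ) ⟨i, i.lt_succ_self.trans hi⟩)ᵀ := by
  set G := gradient (networkLoss L n f) θ
  rw [Matrix.ext_iff_trace_mul_right]
  intro X
  calc _ = inner ℝ G (layerSingle ⟨i + 1, hi⟩ (layerMatrix L n θ ⟨i + 1, hi⟩ * X)) := by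
        rw [inner_layerSingle, Matrix.mul_assoc]
    _ = inner ℝ G (layerSingle ⟨i, i.lt_succ_self.trans hi⟩
          (X * layerMatrix L n θ ⟨i, i.lt_succ_self.trans hi⟩)) := by
        simp only [G, inner_gradient_left]
        exact fderiv_apply_eq_of_forall_add_smul_eq fun t =>
          congrArg f (prefixProd_add_smul_layerSingle_mul_comm θ hi X t)
    _ = _ := by
        rw [inner_layerSingle, ← Matrix.mul_assoc, Matrix.trace_mul_cycle]

end Network

theorem linear_network_balancedness_conserved_general
    (L : ℕ) (n : ℕ → ℕ)
    (f : Matrix (Fin (n L)) (Fin (n 0)) ℝ → ℝ)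
    (T : ℝ)
    (θ : ℝ → EuclideanSpace ℝ ((i : Fin L) × (Fin (n (i + 1)) × Fin (n i))))
    (hflow : ∀ t ∈ Set.Ico (0 : ℝ) T,
      HasDerivWithinAt θ
        (-(gradient (fun p => f (prefixProd n (layerMatrixExt L n p) L)) (θ t)))
        (Set.Ico (0 : ℝ) T) t) :
    ∀ (i : ℕ) (hi : i + 1 < L), ∀ t ∈ Set.Ico (0 : ℝ) T,
      (layerMatrix L n (θ t) ⟨i + 1, hi⟩)ᵀ * layerMatrix L n (θ t) ⟨i + 1, hi⟩ -
        layerMatrix L n (θ t) ⟨i, Nat.lt_of_succ_lt hi⟩ *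
          (layerMatrix L n (θ t) ⟨i, Nat.lt_of_succ_lt hi⟩)ᵀ =
      (layerMatrix L n (θ 0) ⟨i + 1, hi⟩)ᵀ * layerMatrix L n (θ 0) ⟨i + 1, hi⟩ -
        layerMatrix L n (θ 0) ⟨i, Nat.lt_of_succ_lt hi⟩ *
          (layerMatrix L n (θ 0) ⟨i, Nat.lt_of_succ_lt hi⟩)ᵀ := by
  intro i hi t ht
  set s := Set.Ico (0 : ℝ) T
  set G := fun u => gradient (networkLoss L n f) (θ u)
  set j₁ : Fin L := ⟨i + 1, hi⟩
  set j₀ : Fin L := ⟨i, Nat.lt_of_succ_lt hi⟩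
  have hlayer : ∀ j, ∀ u ∈ s, HasDerivWithinAt (fun u => layerMatrix L n (θ u) j)
      (-layerMatrix L n (G u) j) s u := fun j u hu =>
    ((layerCLM L n j).hasFDerivAt.comp_hasDerivWithinAt u (hflow u hu)).congr_deriv (map_neg _ _)
  have hconst : ∀ u ∈ s, HasDerivWithinAt (fun u => (layerMatrix L n (θ u) j₁)ᵀ *
      layerMatrix L n (θ u) j₁ - layerMatrix L n (θ u) j₀ * (layerMatrix L n (θ u) j₀)ᵀ) 0 s u := by
    intro u hu
    have hK := gradient_layer_transpose_mul_eq f (θ u) hi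
    have hKt := congrArg Matrix.transpose hK
    simp only [Matrix.transpose_mul, Matrix.transpose_transpose] at hKt
    refine (((hlayer j₁ u hu).matrix_transpose.matrix_mul (hlayer j₁ u hu)).fun_sub
      ((hlayer j₀ u hu).matrix_mul (hlayer j₀ u hu).matrix_transpose)).congr_deriv ?_
    simp only [Matrix.transpose_neg, Matrix.neg_mul, Matrix.mul_neg, G, j₀, j₁, hK, hKt]
    abel
  exact (convex_Ico (0 : ℝ) T).eq_of_hasDerivWithinAt_zero hconst ⟨le_rfl, ht.1.trans_lt ht.2⟩ ht

/-- For the `L`-layer linear network loss `ℓ(U_L, …, U_1) = f(U_L ⋯ U_1)`,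
along any gradient-flow trajectory the quantities
`U_{i+1}ᵀ U_{i+1} − U_i U_iᵀ` are conserved. -/
theorem linear_network_balancedness_conserved
    (L : ℕ) (hL : 2 ≤ L) (n : ℕ → ℕ) (hn : ∀ i ≤ L, 0 < n i)
    (f : Matrix (Fin (n L)) (Fin (n 0)) ℝ → ℝ) (hf : ContDiff ℝ 1 f)
    (T : ℝ) (hT : 0 < T)
    (θ : ℝ → EuclideanSpace ℝ ((i : Fin L) × (Fin (n (i + 1)) × Fin (n i))))
    (hflow : ∀ t ∈ Set.Ico (0 : ℝ) T,
      HasDerivWithinAt θ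
        (-(gradient (fun p => f (prefixProd n (layerMatrixExt L n p) L)) (θ t)))
        (Set.Ico (0 : ℝ) T) t) :
    ∀ (i : ℕ) (hi : i + 1 < L), ∀ t ∈ Set.Ico (0 : ℝ) T,
      (layerMatrix L n (θ t) ⟨i + 1, hi⟩)ᵀ * layerMatrix L n (θ t) ⟨i + 1, hi⟩ -
        layerMatrix L n (θ t) ⟨i, Nat.lt_of_succ_lt hi⟩ *
          (layerMatrix L n (θ t) ⟨i, Nat.lt_of_succ_lt hi⟩)ᵀ =
      (layerMatrix L n (θ 0) ⟨i + 1, hi⟩)ᵀ * layerMatrix L n (θ 0) ⟨i + 1, hi⟩ -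
        layerMatrix L n (θ 0) ⟨i, Nat.lt_of_succ_lt hi⟩ *
          (layerMatrix L n (θ 0) ⟨i, Nat.lt_of_succ_lt hi⟩)ᵀ :=
  linear_network_balancedness_conserved_general L n f T θ hflow
end

section
/- Let φ : ℝ^D → ℝ^d be twice continuously differentiable, f : ℝ^d → ℝ be twice continuously differentiable, and ℓ := f ∘ φ. Let h : ℝ^D → ℝ^N be continuously differentiable with ∂φ(θ) ∇h_k(θ) = 0 for all θ ∈ ℝ^D and every component h_k of h. Let θ_0 ∈ ℝ^D, let U ⊆ ℝ^D be open with θ_0 ∈ U, set M(θ) := ∂φ(θ) ∂φ(θ)^⊤ ∈ ℝ^{d×d} and M_{θ_0} := {θ ∈ ℝ^D : h(θ) = h(θ_0)}, and suppose there is a function K : ℝ^d → ℝ^{d×d} with M(θ) = K(φ(θ)) for all θ ∈ M_{θ_0} ∩ U. If θ : [0,T) → ℝ^D is differentiable with θ'(t) = −∇ℓ(θ(t)) for all t and θ(0) = θ_0, then for every t with θ(t) ∈ U one has M(θ(t)) = K(φ(θ(t))), and consequently the curve z(t) := φ(θ(t)) satisfies z'(t) = −K(z(t)) ∇f(z(t))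 at every such t. -/
/-!
Along the flow `θ' = -∇(f ∘ φ)(θ) = -∂φ(θ)ᵀ ∇f(φ(θ))`, each component `h_k` of the conservation
law has derivative `⟪∇h_k, -∂φᵀ ∇f⟫ = -⟪∂φ ∇h_k, ∇f⟫ = 0`, so `θ(t)` stays on the level set
`M_{θ₀}`. Where it is also in `U`, the hypothesis gives `∂φ ∂φᵀ = K ∘ φ`, and the chain rule turns
`(φ ∘ θ)' = -∂φ ∂φᵀ ∇f(φ(θ))` into `z' = -K(z) ∇f(z)`.
-/

open ContinuousLinearMap Set

theorem Convex.apply_eq_of_hasDerivWithinAt_of_fderiv_apply_eq_zero {E G : Type*}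
    [NormedAddCommGroup E] [NormedSpace ℝ E] [NormedAddCommGroup G] [NormedSpace ℝ G]
    {g : E → G} {γ γ' : ℝ → E} {s : Set ℝ}
    (hs : Convex ℝ s) (hg : ∀ t ∈ s, DifferentiableAt ℝ g (γ t))
    (hγ : ∀ t ∈ s, HasDerivWithinAt γ (γ' t) s t) (h0 : ∀ t ∈ s, fderiv ℝ g (γ t) (γ' t) = 0)
    {a b : ℝ} (ha : a ∈ s) (hb : b ∈ s) : g (γ b) = g (γ a) := by
  have hderiv : ∀ t ∈ s, HasDerivWithinAt (g ∘ γ) 0 s t := fun t ht => by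
    simpa only [h0 t ht] using (hg t ht).hasFDerivAt.comp_hasDerivWithinAt t (hγ t ht)
  simpa only [norm_zero, zero_mul, norm_le_zero_iff, sub_eq_zero, Function.comp_apply] using
    norm_image_sub_le_of_norm_hasDerivWithin_le hderiv (fun _ _ => le_rfl) hs ha hb

section

variable {E F : Type*} [NormedAddCommGroup E] [InnerProductSpace ℝ E] [CompleteSpace E]
  [NormedAddCommGroup F] [InnerProductSpace ℝ F] [CompleteSpace F]

theorem gradient_comp_eq_adjoint_fderiv {φ : E → F} {f : F → ℝ} {x : E}
    (hφ : DifferentiableAt ℝ φ x) (hf : DifferentiableAt ℝ f (φ x)) :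
    gradient (f ∘ φ) x = adjoint (fderiv ℝ φ x) (gradient f (φ x)) :=
  ext_inner_right ℝ fun v => by
    rw [inner_gradient_left, adjoint_inner_left, inner_gradient_left, fderiv_comp x hf hφ,
      comp_apply]

theorem fderiv_apply_gradient_comp_eq_zero {g : E → ℝ} {φ : E → F} {f : F → ℝ} {x : E}
    (hφ : DifferentiableAt ℝ φ x) (hf : DifferentiableAt ℝ f (φ x))
    (hg : fderiv ℝ φ x (gradient g x) = 0) :
    fderiv ℝ g x (gradient (f ∘ φ) x) = 0 := by
  rw [← inner_gradient_left, gradient_comp_eq_adjoint_fderiv hφ hf, adjoint_inner_right, hg,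
    inner_zero_left]

theorem Convex.apply_eq_along_gradient_flow_of_conservation {φ : E → F} {f : F → ℝ} {g : E → ℝ}
    {θ : ℝ → E} {s : Set ℝ} (hs : Convex ℝ s) (hφ : Differentiable ℝ φ) (hf : Differentiable ℝ f)
    (hg : Differentiable ℝ g) (hcons : ∀ x, fderiv ℝ φ x (gradient g x) = 0)
    (hflow : ∀ t ∈ s, HasDerivWithinAt θ (-gradient (f ∘ φ) (θ t)) s t)
    {a b : ℝ} (ha : a ∈ s) (hb : b ∈ s) : g (θ b) = g (θ a) :=
  hs.apply_eq_of_hasDerivWithinAt_of_fderiv_apply_eq_zero (fun _ _ => hg _) hflow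
    (fun t _ => by
      rw [map_neg, fderiv_apply_gradient_comp_eq_zero (hφ _) (hf _) (hcons _), neg_zero])
    ha hb

end

theorem intrinsic_metric_implies_intrinsic_dynamic_general
    (D d N : ℕ)
    (φ : EuclideanSpace ℝ (Fin D) → EuclideanSpace ℝ (Fin d))
    (f : EuclideanSpace ℝ (Fin d) → ℝ)
    (hφ : ContDiff ℝ 2 φ) (hf : ContDiff ℝ 2 f)
    (h : EuclideanSpace ℝ (Fin D) → EuclideanSpace ℝ (Fin N))
    (hh : ContDiff ℝ 1 h)
    (hcons : ∀ (θ : EuclideanSpace ℝ (Fin D)) (k : Fin N),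
      fderiv ℝ φ θ (gradient (fun x => h x k) θ) = 0)
    (θ₀ : EuclideanSpace ℝ (Fin D))
    (U : Set (EuclideanSpace ℝ (Fin D)))
    (K : EuclideanSpace ℝ (Fin d) →
      (EuclideanSpace ℝ (Fin d) →L[ℝ] EuclideanSpace ℝ (Fin d)))
    (hK : ∀ θ ∈ {θ' : EuclideanSpace ℝ (Fin D) | h θ' = h θ₀} ∩ U,
      (fderiv ℝ φ θ).comp (ContinuousLinearMap.adjoint (fderiv ℝ φ θ)) = K (φ θ))
    (T : ℝ)
    (θ : ℝ → EuclideanSpace ℝ (Fin D))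
    (hθ₀ : θ 0 = θ₀)
    (hflow : ∀ t ∈ Set.Ico (0 : ℝ) T,
      HasDerivWithinAt θ (-(gradient (f ∘ φ) (θ t))) (Set.Ico (0 : ℝ) T) t) :
    ∀ t ∈ Set.Ico (0 : ℝ) T, θ t ∈ U →
      ((fderiv ℝ φ (θ t)).comp (ContinuousLinearMap.adjoint (fderiv ℝ φ (θ t)))
          = K (φ (θ t)) ∧
        HasDerivWithinAt (fun s => φ (θ s))
          (-(K (φ (θ t)) (gradient f (φ (θ t))))) (Set.Ico (0 : ℝ) T) t) := by
  have hφd : Differentiable ℝ φ := hφ.differentiable (by norm_num)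
  have hfd : Differentiable ℝ f := hf.differentiable (by norm_num)
  have hhd : Differentiable ℝ h := hh.differentiable (by norm_num)
  intro t ht htU
  have hlevel : h (θ t) = h θ₀ := by
    ext k
    rw [← hθ₀]
    exact (convex_Ico 0 T).apply_eq_along_gradient_flow_of_conservation hφd hfd
      (by fun_prop) (hcons · k) hflow ⟨le_rfl, ht.1.trans_lt ht.2⟩ ht
  have hM := hK (θ t) ⟨hlevel, htU⟩
  refine ⟨hM, ?_⟩
  have hz := (hφd (θ t)).hasFDerivAt.comp_hasDerivWithinAt t (hflow t ht)
  rwa [map_neg, gradient_comp_eq_adjoint_fderiv (hφd _) (hfd _), ← comp_apply, hM] at hz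

/-- If `M(θ) := ∂φ(θ) ∂φ(θ)ᵀ` agrees with `K ∘ φ` on the level set of a
vector-valued conservation law `h` (intersected with an open set `U`), then along any
gradient-flow trajectory of `ℓ = f ∘ φ` started at `θ₀` one has `M(θ(t)) = K(φ(θ(t)))`
whenever `θ(t) ∈ U`, and the lifted curve `z = φ ∘ θ` satisfies `z' = −K(z) ∇f(z)` there. -/
theorem intrinsic_metric_implies_intrinsic_dynamic
    (D d N : ℕ)
    (φ : EuclideanSpace ℝ (Fin D) → EuclideanSpace ℝ (Fin d))
    (f : EuclideanSpace ℝ (Fin d) → ℝ)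
    (hφ : ContDiff ℝ 2 φ) (hf : ContDiff ℝ 2 f)
    (h : EuclideanSpace ℝ (Fin D) → EuclideanSpace ℝ (Fin N))
    (hh : ContDiff ℝ 1 h)
    (hcons : ∀ (θ : EuclideanSpace ℝ (Fin D)) (k : Fin N),
      fderiv ℝ φ θ (gradient (fun x => h x k) θ) = 0)
    (θ₀ : EuclideanSpace ℝ (Fin D))
    (U : Set (EuclideanSpace ℝ (Fin D))) (hU : IsOpen U) (hθ₀U : θ₀ ∈ U)
    (K : EuclideanSpace ℝ (Fin d) →
      (EuclideanSpace ℝ (Fin d) →L[ℝ] EuclideanSpace ℝ (Fin d)))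
    (hK : ∀ θ ∈ {θ' : EuclideanSpace ℝ (Fin D) | h θ' = h θ₀} ∩ U,
      (fderiv ℝ φ θ).comp (ContinuousLinearMap.adjoint (fderiv ℝ φ θ)) = K (φ θ))
    (T : ℝ) (hT : 0 < T)
    (θ : ℝ → EuclideanSpace ℝ (Fin D))
    (hθ₀ : θ 0 = θ₀)
    (hflow : ∀ t ∈ Set.Ico (0 : ℝ) T,
      HasDerivWithinAt θ (-(gradient (f ∘ φ) (θ t))) (Set.Ico (0 : ℝ) T) t) :
    ∀ t ∈ Set.Ico (0 : ℝ) T, θ t ∈ U →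
      ((fderiv ℝ φ (θ t)).comp (ContinuousLinearMap.adjoint (fderiv ℝ φ (θ t)))
          = K (φ (θ t)) ∧
        HasDerivWithinAt (fun s => φ (θ s))
          (-(K (φ (θ t)) (gradient f (φ (θ t))))) (Set.Ico (0 : ℝ) T) t) :=
  intrinsic_metric_implies_intrinsic_dynamic_general D d N φ f hφ hf h hh hcons θ₀ U K hK T θ hθ₀
    hflow
end

section
/- Let φ : ℝ^D → ℝ^d be twice continuously differentiable and θ_0 ∈ ℝ^D. The following are equivalent. (i) There exist an open neighborhood Ω of θ_0 and a continuously differentiable map h : Ω → ℝ^N such that ∂φ(θ) ∇h_k(θ) = 0 for every θ ∈ Ω and every component h_k of h, and such that ker ∂φ(θ) ∩ ker ∂h(θ) = {0} for every θ ∈ {θ' ∈ Ω : h(θ') = h(θ_0)}. (ii) There exist an open neighborhood U of θ_0 contained in Ω, a continuously differentiable map h : U → ℝ^N with ∂φ(θ) ∇h_k(θ) = 0 for every θ ∈ U and every k, and a map Γ ∈ C¹(ℝ^d × ℝ^N, ℝ^D) such that θ = Γ(φ(θ), h(θ)) for every θ ∈ U. -/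
/-!
Differentiating `Γ (φ θ, h θ) = θ` shows that `∂Γ` is a left inverse of `(∂φ(θ), ∂h(θ))`, whose
kernel is `ker ∂φ(θ) ∩ ker ∂h(θ)`. Conversely, if this kernel is trivial at `θ₀`, compose
`θ ↦ (φ θ, h θ)` with a linear left inverse `π` of its derivative: the result has derivative the
identity at `θ₀`, so it has a `C¹` local inverse `g`; cutting `g` off with a bump function makes
it globally `C¹`, and `Γ = g ∘ π`.
-/

open Filter Function Topology

section Extension

open Metric

variable {E F : Type*} [NormedAddCommGroup E] [NormedSpace ℝ E]
  [NormedAddCommGroup F] [NormedSpace ℝ F]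

theorem ContDiff.smul_of_tsupport_subset {n : WithTop ℕ∞} {χ : E → ℝ} {g : E → F} {s : Set E}
    (hχ : ContDiff ℝ n χ) (hs : IsOpen s) (hsupp : tsupport χ ⊆ s) (hg : ContDiffOn ℝ n g s) :
    ContDiff ℝ n (fun x => χ x • g x) := by
  refine contDiff_iff_contDiffAt.mpr fun x => ?_
  by_cases hx : x ∈ s
  · exact hχ.contDiffAt.smul (hg.contDiffAt (hs.mem_nhds hx))
  · have hzero : (fun y => χ y • g y) =ᶠ[𝓝 x] fun _ => 0 := by
      filter_upwards [(isClosed_tsupport χ).isOpen_compl.mem_nhds fun h => hx (hsupp h)] with y hy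
      rw [image_eq_zero_of_notMem_tsupport hy, zero_smul]
    exact contDiffAt_const.congr_of_eventuallyEq hzero

theorem ContDiffAt.exists_contDiff_eventuallyEq [HasContDiffBump E] {n : ℕ} {g : E → F} {a : E}
    (hg : ContDiffAt ℝ n g a) : ∃ G : E → F, ContDiff ℝ n G ∧ G =ᶠ[𝓝 a] g := by
  obtain ⟨s, hs, hgs⟩ := hg.contDiffOn le_rfl (by simp)
  obtain ⟨ε, hε, hball⟩ := Metric.mem_nhds_iff.mp hs
  let χ : ContDiffBump a := ⟨ε / 3, ε / 2, by positivity, by linarith⟩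
  have hsupp : tsupport χ ⊆ ball a ε := by
    rw [χ.tsupport_eq]
    exact closedBall_subset_ball (by show ε / 2 < ε; linarith)
  refine ⟨fun x => χ x • g x, χ.contDiff.smul_of_tsupport_subset isOpen_ball hsupp
    (hgs.mono hball), ?_⟩
  filter_upwards [χ.eventuallyEq_one] with x hx
  rw [hx, Pi.one_apply, one_smul]

end Extension

section LeftInverse

variable {𝕜 : Type*} [NontriviallyNormedField 𝕜] {E F G : Type*}
  [NormedAddCommGroup E] [NormedSpace 𝕜 E] [NormedAddCommGroup F] [NormedSpace 𝕜 F]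
  [NormedAddCommGroup G] [NormedSpace 𝕜 G]

theorem injective_fderiv_of_eventually_leftInverse {f : E → F} {Γ : F → E} {x : E}
    (hΓ : DifferentiableAt 𝕜 Γ (f x)) (hf : DifferentiableAt 𝕜 f x)
    (hinv : ∀ᶠ y in 𝓝 x, Γ (f y) = y) : Injective (fderiv 𝕜 f x) := by
  have hcomp : fderiv 𝕜 Γ (f x) ∘L fderiv 𝕜 f x = .id 𝕜 E := by
    rw [← fderiv_comp x hΓ hf, (show Γ ∘ f =ᶠ[𝓝 x] id from hinv).fderiv_eq, fderiv_id]
  exact (ContinuousLinearMap.leftInverse_of_comp hcomp).injective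

theorem injective_fderiv_prodMk_iff {f : E → F} {g : E → G} {x : E}
    (hf : DifferentiableAt 𝕜 f x) (hg : DifferentiableAt 𝕜 g x) :
    Injective (fderiv 𝕜 (fun y => (f y, g y)) x) ↔
      ∀ v, fderiv 𝕜 f x v = 0 → fderiv 𝕜 g x v = 0 → v = 0 := by
  rw [hf.fderiv_prodMk hg, injective_iff_map_eq_zero]
  simp only [ContinuousLinearMap.prod_apply, Prod.mk_eq_zero, and_imp]

end LeftInverse

section LocalLeftInverse

variable {E F : Type*} [NormedAddCommGroup E] [NormedSpace ℝ E] [CompleteSpace E]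
  [HasContDiffBump E] [NormedAddCommGroup F] [NormedSpace ℝ F] [FiniteDimensional ℝ F]

theorem ContDiffAt.exists_contDiff_eventually_leftInverse {n : ℕ} {f : E → F} {x : E}
    (hf : ContDiffAt ℝ n f x) (hn : n ≠ 0) (hinj : Injective (fderiv ℝ f x)) :
    ∃ Γ : F → E, ContDiff ℝ n Γ ∧ ∀ᶠ y in 𝓝 x, Γ (f y) = y := by
  obtain ⟨π, hπ⟩ := ContinuousLinearMap.HasLeftInverse.of_injective_of_finiteDimensional hinj
  have hψ : ContDiffAt ℝ n (π ∘ f) x := π.contDiff.contDiffAt.comp x hf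
  have hψ' : HasFDerivAt (π ∘ f) (ContinuousLinearEquiv.refl ℝ E : E →L[ℝ] E) x := by
    convert π.hasFDerivAt.comp x (hf.differentiableAt (by exact_mod_cast hn)).hasFDerivAt
    ext v
    exact (hπ v).symm
  have hn' : (n : WithTop ℕ∞) ≠ 0 := by exact_mod_cast hn
  obtain ⟨G, hG, hGg⟩ := (hψ.to_localInverse hψ' hn').exists_contDiff_eventuallyEq
  refine ⟨G ∘ π, hG.comp π.contDiff, ?_⟩
  filter_upwards [hψ.continuousAt.eventually hGg,
    (hψ.hasStrictFDerivAt' hψ' hn').eventually_left_inverse] with y hGy hy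
  exact hGy.trans hy

end LocalLeftInverse

/-- For a `C²` reparametrization `φ` and a point `θ₀`, the following are
equivalent: (i) there exist conservation laws `h` for `φ` on an open neighborhood `Ω` of `θ₀`
such that `ker ∂φ(θ) ∩ ker ∂h(θ) = {0}` on the level set `{h = h(θ₀)} ∩ Ω`;
(ii) θ₀ satisfies the intrinsic recoverability property: there are an open neighborhood `U`,
conservation laws `h` for `φ` on `U`, and a `C¹` map `Γ` with `Γ(φ(θ), h(θ)) = θ` on `U`. -/
theorem intrinsic_recoverability_iff_kernel_condition
    (D d : ℕ)
    (φ : EuclideanSpace ℝ (Fin D) → EuclideanSpace ℝ (Fin d))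
    (hφ : ContDiff ℝ 2 φ)
    (θ₀ : EuclideanSpace ℝ (Fin D)) :
    (∃ (N : ℕ) (Ω : Set (EuclideanSpace ℝ (Fin D)))
        (h : EuclideanSpace ℝ (Fin D) → EuclideanSpace ℝ (Fin N)),
      IsOpen Ω ∧ θ₀ ∈ Ω ∧ ContDiffOn ℝ 1 h Ω ∧
      (∀ θ ∈ Ω, ∀ k : Fin N, fderiv ℝ φ θ (gradient (fun x => h x k) θ) = 0) ∧
      (∀ θ ∈ Ω, h θ = h θ₀ →
        ∀ v : EuclideanSpace ℝ (Fin D),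
          fderiv ℝ φ θ v = 0 → fderiv ℝ h θ v = 0 → v = 0)) ↔
    (∃ (N : ℕ) (U : Set (EuclideanSpace ℝ (Fin D)))
        (h : EuclideanSpace ℝ (Fin D) → EuclideanSpace ℝ (Fin N))
        (Γ : EuclideanSpace ℝ (Fin d) × EuclideanSpace ℝ (Fin N) →
          EuclideanSpace ℝ (Fin D)),
      IsOpen U ∧ θ₀ ∈ U ∧ ContDiffOn ℝ 1 h U ∧
      (∀ θ ∈ U, ∀ k : Fin N, fderiv ℝ φ θ (gradient (fun x => h x k) θ) = 0) ∧
      ContDiff ℝ 1 Γ ∧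
      (∀ θ ∈ U, Γ (φ θ, h θ) = θ)) := by
  have hφ1 : ContDiff ℝ 1 φ := hφ.of_le one_le_two
  constructor
  · rintro ⟨N, Ω, h, hΩ, hθ₀, hh, hcons, hker⟩
    have hhθ₀ : ContDiffAt ℝ 1 h θ₀ := hh.contDiffAt (hΩ.mem_nhds hθ₀)
    have hinj : Injective (fderiv ℝ (fun θ => (φ θ, h θ)) θ₀) :=
      (injective_fderiv_prodMk_iff (hφ1.differentiable one_ne_zero θ₀)
        (hhθ₀.differentiableAt one_ne_zero)).mpr (hker θ₀ hθ₀ rfl)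
    obtain ⟨Γ, hΓ, hΓinv⟩ :=
      (hφ1.contDiffAt.prodMk hhθ₀).exists_contDiff_eventually_leftInverse one_ne_zero hinj
    obtain ⟨V, hV, hVopen, hθ₀V⟩ := eventually_nhds_iff.mp hΓinv
    exact ⟨N, Ω ∩ V, h, Γ, hΩ.inter hVopen, ⟨hθ₀, hθ₀V⟩, hh.mono Set.inter_subset_left,
      fun θ hθ => hcons θ hθ.1, hΓ, fun θ hθ => hV θ hθ.2⟩
  · rintro ⟨N, U, h, Γ, hU, hθ₀, hh, hcons, hΓ, hΓinv⟩
    refine ⟨N, U, h, hU, hθ₀, hh, hcons, fun θ hθ _ => ?_⟩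
    have hhθ : DifferentiableAt ℝ h θ :=
      (hh.contDiffAt (hU.mem_nhds hθ)).differentiableAt one_ne_zero
    refine (injective_fderiv_prodMk_iff (hφ1.differentiable one_ne_zero θ) hhθ).mp ?_
    exact injective_fderiv_of_eventually_leftInverse (hΓ.differentiable one_ne_zero _)
      ((hφ1.differentiable one_ne_zero θ).prodMk hhθ)
      (eventually_of_mem (hU.mem_nhds hθ) hΓinv)
end

section
/- Let D, d be positive integers and for each i ∈ {1, …, d} let α^{(i)} ∈ ℕ^D, and assume the exponents are coherent: for all ℓ ∈ {1, …, D} and all i, k ∈ {1, …, d}, if α_ℓ^{(i)} > 0 and α_ℓ^{(k)} > 0 then α_ℓ^{(i)} = α_ℓ^{(k)}. Define the monomial maps φ_i : ℝ^D → ℝ by φ_i(θ) = ∏_{ℓ=1}^D θ_ℓ^{α_ℓ^{(i)}}. Then for every θ ∈ ℝ^D with θ_ℓ ≠ 0 for all ℓ, and for all i, j ∈ {1, …, d}, the Lie bracket [∇φ_i, ∇φ_j](θ) := ∂(∇φ_j)(θ) ∇φ_i(θ) − ∂(∇φ_i)(θ) ∇φ_j(θ) belongs to the linear span of {∇φ_i(θ),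 ∇φ_j(θ)} in ℝ^D. -/
/-!
Off the coordinate hyperplanes the gradient of `φ_a(θ) = ∏ θ_ℓ ^ a_ℓ` factors as
`∇φ_a = φ_a • w_a` with `w_a = (a_ℓ / θ_ℓ)_ℓ` (`logGradient a`), the gradient of
`∑ a_ℓ log |θ_ℓ|`. The `ℓ`-th coordinate of `w_a` depends on `θ_ℓ` alone, so the Jacobians of
the `w_a` are diagonal and `[w_a, w_b] = 0`. The Leibniz rule for brackets then leaves only the
terms coming from differentiating the scalar factors:
`[φ_a • w_a, φ_b • w_b] = ⟪w_a, w_b⟫ • (φ_a • ∇φ_b - φ_b • ∇φ_a)`.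
-/

open Filter Topology VectorField

theorem natCast_mul_pow_sub_one {K : Type*} [Field K] {t : K} (ht : t ≠ 0) (n : ℕ) :
    n * t ^ (n - 1) = t ^ n * (n / t) := by
  rcases n with _ | n
  · simp
  · rw [Nat.add_sub_cancel, pow_succ]
    field_simp

variable {ι : Type*} [Fintype ι]

def monomialMap (a : ι → ℕ) (x : EuclideanSpace ℝ ι) : ℝ := ∏ m, x m ^ a m

/-- `∇φ / φ` for `φ = monomialMap a`, wherever no coordinate of `x` vanishes. -/
noncomputable def logGradient (a : ι → ℕ) (x : EuclideanSpace ℝ ι) : EuclideanSpace ℝ ι :=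
  WithLp.toLp 2 fun ℓ => a ℓ / x ℓ

variable {θ : EuclideanSpace ℝ ι}

theorem hasGradientAt_monomialMap (a : ι → ℕ) (hθ : ∀ ℓ, θ ℓ ≠ 0) :
    HasGradientAt (monomialMap a) (monomialMap a θ • logGradient a θ) θ := by
  classical
  have hpow (ℓ : ι) : HasFDerivAt (fun x : EuclideanSpace ℝ ι => x ℓ ^ a ℓ)
      ((a ℓ * θ ℓ ^ (a ℓ - 1)) • EuclideanSpace.proj ℓ) θ :=
    (hasDerivAt_pow (a ℓ) (θ ℓ)).comp_hasFDerivAt θ (EuclideanSpace.proj (𝕜 := ℝ) ℓ).hasFDerivAt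
  rw [hasGradientAt_iff_hasFDerivAt]
  refine (HasFDerivAt.finsetProd (u := Finset.univ) fun ℓ _ => hpow ℓ).congr_fderiv ?_
  ext v
  simp only [FunLike.coe_sum, Finset.sum_apply, FunLike.coe_smul, Pi.smul_apply, PiLp.proj_apply,
    InnerProductSpace.toDual_apply_apply, PiLp.inner_apply, PiLp.smul_apply, smul_eq_mul,
    RCLike.inner_apply, Real.ringHom_apply, logGradient, monomialMap]
  refine Finset.sum_congr rfl fun ℓ _ => ?_
  rw [natCast_mul_pow_sub_one (hθ ℓ), ← Finset.mul_prod_erase Finset.univ _ (Finset.mem_univ ℓ)]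
  ring

theorem eventually_forall_coord_ne_zero (hθ : ∀ ℓ, θ ℓ ≠ 0) : ∀ᶠ x in 𝓝 θ, ∀ ℓ, x ℓ ≠ 0 :=
  eventually_all.2 fun ℓ =>
    (EuclideanSpace.proj (𝕜 := ℝ) ℓ).continuous.continuousAt.eventually_ne (hθ ℓ)

theorem gradient_monomialMap_eventuallyEq (a : ι → ℕ) (hθ : ∀ ℓ, θ ℓ ≠ 0) :
    gradient (monomialMap a) =ᶠ[𝓝 θ] fun x => monomialMap a x • logGradient a x := by
  filter_upwards [eventually_forall_coord_ne_zero hθ] with x hx using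
    (hasGradientAt_monomialMap a hx).gradient

theorem hasFDerivAt_logGradient_apply (a : ι → ℕ) (hθ : ∀ ℓ, θ ℓ ≠ 0) (ℓ : ι) :
    HasFDerivAt (fun x => logGradient a x ℓ)
      ((-(a ℓ) / θ ℓ ^ 2) • EuclideanSpace.proj (𝕜 := ℝ) ℓ) θ := by
  refine (((hasDerivAt_inv (hθ ℓ)).const_mul (a ℓ : ℝ)).comp_hasFDerivAt θ
    (EuclideanSpace.proj (𝕜 := ℝ) ℓ).hasFDerivAt).congr_fderiv ?_
  congr 1
  ring

theorem differentiableAt_logGradient (a : ι → ℕ) (hθ : ∀ ℓ, θ ℓ ≠ 0) :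
    DifferentiableAt ℝ (logGradient a) θ :=
  (differentiableAt_piLp 2).2 fun ℓ => (hasFDerivAt_logGradient_apply a hθ ℓ).differentiableAt

theorem fderiv_logGradient_apply (a : ι → ℕ) (hθ : ∀ ℓ, θ ℓ ≠ 0) (v : EuclideanSpace ℝ ι)
    (ℓ : ι) : fderiv ℝ (logGradient a) θ v ℓ = -(a ℓ) / θ ℓ ^ 2 * v ℓ := by
  have h := (EuclideanSpace.proj (𝕜 := ℝ) ℓ).hasFDerivAt.comp θ
    (differentiableAt_logGradient a hθ).hasFDerivAt
  exact congrArg (· v) (h.unique (hasFDerivAt_logGradient_apply a hθ ℓ))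

theorem lieBracket_logGradient (a b : ι → ℕ) (hθ : ∀ ℓ, θ ℓ ≠ 0) :
    lieBracket ℝ (logGradient a) (logGradient b) θ = 0 := by
  ext ℓ
  simp only [lieBracket_eq, logGradient, PiLp.sub_apply, fderiv_logGradient_apply _ hθ,
    PiLp.zero_apply]
  ring

theorem lieBracket_gradient_monomialMap (a b : ι → ℕ) (hθ : ∀ ℓ, θ ℓ ≠ 0) :
    lieBracket ℝ (gradient (monomialMap a)) (gradient (monomialMap b)) θ =
      inner ℝ (logGradient a θ) (logGradient b θ) •
        (monomialMap a θ • gradient (monomialMap b) θ -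
          monomialMap b θ • gradient (monomialMap a) θ) := by
  have ha := hasGradientAt_monomialMap a hθ
  have hb := hasGradientAt_monomialMap b hθ
  rw [(gradient_monomialMap_eventuallyEq a hθ).lieBracket_vectorField_eq
      (gradient_monomialMap_eventuallyEq b hθ),
    lieBracket_smul_left ha.differentiableAt (differentiableAt_logGradient a hθ),
    lieBracket_smul_right hb.differentiableAt (differentiableAt_logGradient b hθ),
    lieBracket_logGradient a b hθ, ha.hasFDerivAt.fderiv, hb.hasFDerivAt.fderiv,
    ha.gradient, hb.gradient]
  simp only [InnerProductSpace.toDual_apply_apply, real_inner_smul_left, real_inner_smul_right,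
    real_inner_comm (logGradient a θ)]
  module

theorem monomial_lie_bracket_in_span_general
    (D d : ℕ)
    (α : Fin d → Fin D → ℕ)
    (φ : Fin d → EuclideanSpace ℝ (Fin D) → ℝ)
    (hφ : ∀ (i : Fin d) (θ : EuclideanSpace ℝ (Fin D)), φ i θ = ∏ ℓ, θ ℓ ^ α i ℓ)
    (θ : EuclideanSpace ℝ (Fin D)) (hθ : ∀ ℓ, θ ℓ ≠ 0)
    (i j : Fin d) :
    fderiv ℝ (fun x => gradient (φ j) x) θ (gradient (φ i) θ) -
      fderiv ℝ (fun x => gradient (φ i) x) θ (gradient (φ j) θ) ∈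
    Submodule.span ℝ {gradient (φ i) θ, gradient (φ j) θ} := by
  have hφ_eq (k : Fin d) : φ k = monomialMap (α k) := funext (hφ k)
  change lieBracket ℝ (gradient (φ i)) (gradient (φ j)) θ ∈ _
  rw [hφ_eq i, hφ_eq j, lieBracket_gradient_monomialMap _ _ hθ]
  set c := inner ℝ (logGradient (α i) θ) (logGradient (α j) θ)
  exact Submodule.mem_span_pair.2
    ⟨-(c * monomialMap (α j) θ), c * monomialMap (α i) θ, by module⟩

/-- Let `φ i (θ) = ∏ ℓ, θ ℓ ^ α i ℓ` be monomial maps with coherent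
exponents (any variable appearing in two monomials does so with the same exponent).
Then at every point `θ` with all coordinates nonzero, the Lie bracket
`[∇φ_i, ∇φ_j](θ) = ∂(∇φ_j)(θ) ∇φ_i(θ) − ∂(∇φ_i)(θ) ∇φ_j(θ)` lies in the span of
`∇φ_i(θ)` and `∇φ_j(θ)`. -/
theorem monomial_lie_bracket_in_span
    (D d : ℕ) (hD : 0 < D) (hd : 0 < d)
    (α : Fin d → Fin D → ℕ)
    (hcoh : ∀ (ℓ : Fin D) (i k : Fin d), 0 < α i ℓ → 0 < α k ℓ → α i ℓ = α k ℓ)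
    (φ : Fin d → EuclideanSpace ℝ (Fin D) → ℝ)
    (hφ : ∀ (i : Fin d) (θ : EuclideanSpace ℝ (Fin D)), φ i θ = ∏ ℓ, θ ℓ ^ α i ℓ)
    (θ : EuclideanSpace ℝ (Fin D)) (hθ : ∀ ℓ, θ ℓ ≠ 0)
    (i j : Fin d) :
    fderiv ℝ (fun x => gradient (φ j) x) θ (gradient (φ i) θ) -
      fderiv ℝ (fun x => gradient (φ i) x) θ (gradient (φ j) θ) ∈
    Submodule.span ℝ {gradient (φ i) θ, gradient (φ j) θ} :=
  monomial_lie_bracket_in_span_general D d α φ hφ θ hθ i j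
end

section
/- Let n, m be positive integers and let Y ∈ ℝ^{n×m} be a matrix all of whose entries are strictly positive. Then there exists a unique pair of vectors (α, β) with α ∈ ℝ^n, β ∈ ℝ^m, all entries of α and β strictly positive, such that α_i² = Σ_{j=1}^m Y_{ij} / β_j for every i ∈ {1, …, n} and β_j² = Σ_{i=1}^n Y_{ij} / α_i for every j ∈ {1, …, m}. -/
open Real Finset Function

private lemma abs_log_sum_sub_le {ι : Type*} [Fintype ι] [Nonempty ι]
    (w s t : ι → ℝ) (hw : ∀ i, 0 < w i) (c : ℝ)
    (h : ∀ i, |s i - t i| ≤ c) :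
    |Real.log (∑ i, w i * Real.exp (s i)) - Real.log (∑ i, w i * Real.exp (t i))| ≤ c := by
  have hsum : ∀ (r : ι → ℝ), 0 < ∑ i, w i * Real.exp (r i) := fun r =>
    Finset.sum_pos (fun i _ => mul_pos (hw i) (Real.exp_pos _)) Finset.univ_nonempty
  have key : ∀ (s t : ι → ℝ), (∀ i, s i - t i ≤ c) →
      Real.log (∑ i, w i * Real.exp (s i)) - Real.log (∑ i, w i * Real.exp (t i)) ≤ c := by
    intro s t h
    have hle : ∑ i, w i * Real.exp (s i) ≤ Real.exp c * ∑ i, w i * Real.exp (t i) := by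
      rw [Finset.mul_sum]
      refine Finset.sum_le_sum fun i _ => ?_
      have h1 : Real.exp (s i) ≤ Real.exp c * Real.exp (t i) := by
        rw [← Real.exp_add]; exact Real.exp_le_exp.2 (by linarith [h i])
      calc w i * Real.exp (s i) ≤ w i * (Real.exp c * Real.exp (t i)) :=
            mul_le_mul_of_nonneg_left h1 (hw i).le
        _ = Real.exp c * (w i * Real.exp (t i)) := by ring
    have hlog := Real.log_le_log (hsum s) hle
    rw [Real.log_mul (Real.exp_ne_zero c) (ne_of_gt (hsum t)), Real.log_exp] at hlog
    linarith
  rw [abs_sub_le_iff]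
  exact ⟨key s t (fun i => (abs_le.1 (h i)).2),
         key t s (fun i => by have := (abs_le.1 (h i)).1; linarith)⟩

/-- For a matrix `Y` with strictly positive entries, there is a unique pair
of entrywise-positive vectors `(α, β)` with `α_i² = Σ_j Y_{ij}/β_j` and
`β_j² = Σ_i Y_{ij}/α_i`. -/
theorem unique_positive_balancing_pair
    (n m : ℕ) (hn : 0 < n) (hm : 0 < m)
    (Y : Matrix (Fin n) (Fin m) ℝ) (hY : ∀ i j, 0 < Y i j) :
    ∃! p : (Fin n → ℝ) × (Fin m → ℝ),
      (∀ i, 0 < p.1 i) ∧ (∀ j, 0 < p.2 j) ∧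
      (∀ i, (p.1 i) ^ 2 = ∑ j, Y i j / p.2 j) ∧
      (∀ j, (p.2 j) ^ 2 = ∑ i, Y i j / p.1 i) := by
  haveI : Nonempty (Fin n) := Fin.pos_iff_nonempty.mp hn
  haveI : Nonempty (Fin m) := Fin.pos_iff_nonempty.mp hm
  set G : (Fin m → ℝ) → Fin n → ℝ :=
    fun x i => Real.log (∑ j, Y i j * Real.exp (-x j)) with hGdef
  set F : (Fin m → ℝ) → Fin m → ℝ :=
    fun x j => (1/2) * Real.log (∑ i, Y i j * Real.exp (-(G x i) / 2)) with hFdef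
  -- G is 1-Lipschitz (entrywise)
  have hGlip : ∀ x y i, |G x i - G y i| ≤ dist x y := by
    intro x y i
    refine abs_log_sum_sub_le (fun j => Y i j) _ _ (fun j => hY i j) _ fun j => ?_
    have h := dist_le_pi_dist x y j
    rw [Real.dist_eq] at h
    calc |(-x j) - (-y j)| = |x j - y j| := by rw [abs_sub_comm]; ring_nf
      _ ≤ dist x y := h
  -- F is 1/4-Lipschitz (entrywise)
  have hFlip : ∀ x y j, |F x j - F y j| ≤ (1/4) * dist x y := by
    intro x y j
    have key : |Real.log (∑ i, Y i j * Real.exp (-(G x i) / 2)) -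
        Real.log (∑ i, Y i j * Real.exp (-(G y i) / 2))| ≤ dist x y / 2 := by
      refine abs_log_sum_sub_le (fun i => Y i j) _ _ (fun i => hY i j) _ fun i => ?_
      have := hGlip x y i
      rw [abs_le] at this ⊢
      constructor <;> [linarith [this.2]; linarith [this.1]]
    simp only [hFdef]
    rw [← mul_sub, abs_mul]
    rw [abs_of_pos (by norm_num : (0:ℝ) < 1/2)]
    linarith
  have hlip : LipschitzWith (1/4) F := by
    refine LipschitzWith.of_dist_le_mul fun x y => ?_
    have hcoe : ((1/4 : NNReal) : ℝ) = 1/4 := by norm_num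
    rw [hcoe]
    refine (dist_pi_le_iff (by positivity)).2 fun j => ?_
    rw [Real.dist_eq]
    exact hFlip x y j
  have hcontr : ContractingWith (1/4) F := ⟨NNReal.coe_lt_coe.mp (by norm_num), hlip⟩
  set x : Fin m → ℝ := ContractingWith.fixedPoint F hcontr with hxdef
  have hfix : F x = x := hcontr.fixedPoint_isFixedPt
  -- positivity of sums
  have hsumG : ∀ (z : Fin m → ℝ) i, 0 < ∑ j, Y i j * Real.exp (-z j) := fun z i =>
    Finset.sum_pos (fun j _ => mul_pos (hY i j) (Real.exp_pos _)) Finset.univ_nonempty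
  set α : Fin n → ℝ := fun i => Real.exp (G x i / 2) with hαdef
  set β : Fin m → ℝ := fun j => Real.exp (x j) with hβdef
  have hα : ∀ i, 0 < α i := fun i => Real.exp_pos _
  have hβ : ∀ j, 0 < β j := fun j => Real.exp_pos _
  have hdiv : ∀ i j, Y i j / β j = Y i j * Real.exp (-x j) := by
    intro i j; rw [div_eq_mul_inv, hβdef, ← Real.exp_neg]
  have heq1 : ∀ i, (α i) ^ 2 = ∑ j, Y i j / β j := by
    intro i
    have : (α i) ^ 2 = Real.exp (G x i) := by
      rw [hαdef, ← Real.exp_nat_mul]; ring_nf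
    rw [this, hGdef]
    simp only []
    rw [Real.exp_log (hsumG x i)]
    exact (Finset.sum_congr rfl fun j _ => (hdiv i j)).symm
  have heq2 : ∀ j, (β j) ^ 2 = ∑ i, Y i j / α i := by
    intro j
    have hxj : x j = F x j := (congrFun hfix j).symm
    have : (β j) ^ 2 = Real.exp (2 * x j) := by
      rw [hβdef, ← Real.exp_nat_mul]; norm_num
    rw [this, hxj]
    simp only [hFdef]
    rw [show 2 * ((1:ℝ)/2 * Real.log (∑ i, Y i j * Real.exp (-(G x i)/2))) =
        Real.log (∑ i, Y i j * Real.exp (-(G x i)/2)) by ring]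
    rw [Real.exp_log (Finset.sum_pos (fun i _ => mul_pos (hY i j) (Real.exp_pos _))
      Finset.univ_nonempty)]
    refine Finset.sum_congr rfl fun i _ => ?_
    show Y i j * Real.exp (-G x i / 2) = Y i j / Real.exp (G x i / 2)
    rw [div_eq_mul_inv (Y i j), ← Real.exp_neg, neg_div]
  refine ⟨(α, β), ⟨hα, hβ, heq1, heq2⟩, ?_⟩
  rintro ⟨a, b⟩ ⟨ha, hb, he1, he2⟩
  -- show log b is a fixed point of F
  set y : Fin m → ℝ := fun j => Real.log (b j) with hydef
  have hGy : ∀ i, G y i = 2 * Real.log (a i) := by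
    intro i
    have : ∀ j, Y i j * Real.exp (-y j) = Y i j / b j := by
      intro j
      rw [hydef]
      simp only []
      rw [← Real.log_inv, Real.exp_log (inv_pos.mpr (hb j)), div_eq_mul_inv]
    rw [hGdef]
    simp only []
    rw [Finset.sum_congr rfl fun j _ => this j, ← he1 i,
      Real.log_pow]
    push_cast; ring
  have hyfix : F y = y := by
    funext j
    rw [hFdef]
    simp only []
    have : ∀ i, Y i j * Real.exp (-(G y i)/2) = Y i j / a i := by
      intro i
      rw [hGy i, show -(2 * Real.log (a i))/2 = -Real.log (a i) by ring,
        ← Real.log_inv, Real.exp_log (inv_pos.mpr (ha i)), div_eq_mul_inv]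
    rw [Finset.sum_congr rfl fun i _ => this i, ← he2 j, Real.log_pow]
    rw [hydef]
    push_cast; ring
  have hyx : y = x := hcontr.fixedPoint_unique hyfix
  have hbβ : b = β := by
    funext j
    have : b j = Real.exp (y j) := by rw [hydef]; exact (Real.exp_log (hb j)).symm
    rw [this, hyx]
  have haα : a = α := by
    funext i
    have h1 : (a i) ^ 2 = (α i) ^ 2 := by
      rw [he1 i, heq1 i, hbβ]
    nlinarith [ha i, hα i]
  rw [haα, hbβ]
end

section
/- Let n, m be positive integers and let f : ℝ^{n×m} → ℝ be continuously differentiable. Define ℓ(u, V, w) := f(diag(u) V diag(w)) for u ∈ ℝ^n, V ∈ ℝ^{n×m}, w ∈ ℝ^m, where diag(v) is the diagonal matrix with diagonal v. If t ↦ (u(t), V(t), w(t)) is a differentiable curve on [0,T) following the gradient flow (u'(t), V'(t), w'(t)) = −∇ℓ(u(t), V(t), w(t)), then for every i ∈ {1,…,n} the quantity u_i(t)² − Σ_{j=1}^m V_{ij}(t)² is constant in t, and for every j ∈ {1,…,m} the quantity w_j(t)² − Σ_{i=1}^n V_{ij}(t)² is constant in t. -/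
attribute [local instance] Matrix.normedAddCommGroup Matrix.normedSpace

/-- The product `diag(u) V diag(w)` associated to the parameter vector
`θ = (u, V, w)` of a 3-layer network with scalar input and output. -/
noncomputable def threeLayerLift (n m : ℕ)
    (θ : EuclideanSpace ℝ (Fin n ⊕ (Fin n × Fin m) ⊕ Fin m)) :
    Matrix (Fin n) (Fin m) ℝ :=
  Matrix.diagonal (fun i => θ (Sum.inl i)) *
    Matrix.of (fun i j => θ (Sum.inr (Sum.inl (i, j)))) *
      Matrix.diagonal (fun j => θ (Sum.inr (Sum.inr j)))

/-! `ℓ` is invariant under the rescalings `(u_i, V_{i·}) ↦ (eˢ u_i, e⁻ˢ V_{i·})` and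
`(w_j, V_{·j}) ↦ (eˢ w_j, e⁻ˢ V_{·j})`. Differentiating such an invariance under a diagonal
rescaling `θ ↦ exp(s c) ⊙ θ` at `s = 0` shows that its generator `c ⊙ θ` is orthogonal to `∇ℓ`.
Since `c ⊙ θ` is half the gradient of `Σ_k c_k θ_k²`, this quantity is constant along the gradient
flow (Noether's theorem); the weights `c = ±1, 0` give the two conservation laws. -/

theorem fderiv_apply_eq_zero_of_comp_const {E F : Type*} [NormedAddCommGroup E]
    [NormedSpace ℝ E] [NormedAddCommGroup F] [NormedSpace ℝ F] {g : E → F} {γ : ℝ → E}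
    {v : E} {s : ℝ} (hg : DifferentiableAt ℝ g (γ s)) (hγ : HasDerivAt γ v s)
    (hconst : ∀ r, g (γ r) = g (γ s)) : fderiv ℝ g (γ s) v = 0 := by
  have hcomp : HasDerivAt (fun r => g (γ r)) (fderiv ℝ g (γ s) v) s :=
    hg.hasFDerivAt.comp_hasDerivAt s hγ
  simp only [hconst] at hcomp
  exact hcomp.unique (hasDerivAt_const s _)

section DiagonalScaling

variable {ι : Type*} [Fintype ι]

noncomputable def diagExpScale (c : ι → ℝ) (s : ℝ) (p : EuclideanSpace ℝ ι) :
    EuclideanSpace ℝ ι :=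
  WithLp.toLp 2 fun k => Real.exp (c k * s) * p k

omit [Fintype ι] in
theorem diagExpScale_zero (c : ι → ℝ) (p : EuclideanSpace ℝ ι) : diagExpScale c 0 p = p := by
  ext k
  simp [diagExpScale]

theorem hasDerivAt_diagExpScale (c : ι → ℝ) (p : EuclideanSpace ℝ ι) :
    HasDerivAt (fun s => diagExpScale c s p) (WithLp.toLp 2 fun k => c k * p k) 0 := by
  have hcoord : ∀ k, HasDerivAt (fun s => Real.exp (c k * s) * p k) (c k * p k) 0 := by
    intro k
    simpa using (((hasDerivAt_id (0 : ℝ)).const_mul (c k)).exp).mul_const (p k)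
  exact (PiLp.hasFDerivAt_toLp 2 _).comp_hasDerivAt 0 (hasDerivAt_pi.2 hcoord)

theorem sum_mul_gradient_eq_zero_of_diagExpScale_invariant {g : EuclideanSpace ℝ ι → ℝ}
    {c : ι → ℝ} (hinv : ∀ s p, g (diagExpScale c s p) = g p) {p : EuclideanSpace ℝ ι}
    (hg : DifferentiableAt ℝ g p) :
    ∑ k, c k * p k * gradient g p k = 0 := by
  have hp : diagExpScale c 0 p = p := diagExpScale_zero c p
  have hv := fderiv_apply_eq_zero_of_comp_const (hp.symm ▸ hg) (hasDerivAt_diagExpScale c p)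
    fun r => by rw [hinv, hinv]
  rw [hp, ← inner_gradient_left, real_inner_comm, PiLp.inner_apply] at hv
  simpa [mul_comm] using hv

theorem weighted_sq_sum_conserved_of_gradient_flow {g : EuclideanSpace ℝ ι → ℝ}
    (hg : Differentiable ℝ g) {c : ι → ℝ} (hinv : ∀ s p, g (diagExpScale c s p) = g p)
    {θ : ℝ → EuclideanSpace ℝ ι} {I : Set ℝ} (hI : Convex ℝ I)
    (hflow : ∀ t ∈ I, HasDerivWithinAt θ (-gradient g (θ t)) I t)
    {t₀ t : ℝ} (ht₀ : t₀ ∈ I) (ht : t ∈ I) :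
    ∑ k, c k * θ t k ^ 2 = ∑ k, c k * θ t₀ k ^ 2 := by
  have hderiv : ∀ x ∈ I, HasDerivWithinAt (fun t => ∑ k, c k * θ t k ^ 2) 0 I x := by
    intro x hx
    have hcoord : ∀ k, HasDerivWithinAt (fun t => θ t k) (-gradient g (θ x) k) I x := fun k =>
      (PiLp.hasFDerivAt_apply 2 (θ x) k).comp_hasDerivWithinAt x (hflow x hx)
    have hsum : HasDerivWithinAt (fun t => ∑ k, c k * θ t k ^ 2)
        (∑ k, c k * (2 * θ x k * -gradient g (θ x) k)) I x :=
      HasDerivWithinAt.fun_sum fun k _ => by simpa using ((hcoord k).pow 2).const_mul (c k)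
    refine hsum.congr_deriv ?_
    have hnoether := sum_mul_gradient_eq_zero_of_diagExpScale_invariant hinv (hg (θ x))
    calc ∑ k, c k * (2 * θ x k * -gradient g (θ x) k)
        = -2 * ∑ k, c k * θ x k * gradient g (θ x) k := by
          rw [Finset.mul_sum]; exact Finset.sum_congr rfl fun k _ => by ring
      _ = 0 := by rw [hnoether, mul_zero]
  have hle := hI.norm_image_sub_le_of_norm_hasDerivWithin_le hderiv (fun _ _ => norm_zero.le) ht₀ ht
  simpa [sub_eq_zero] using hle

end DiagonalScaling

section ThreeLayer

abbrev ThreeLayerIndex (n m : ℕ) : Type := Fin n ⊕ (Fin n × Fin m) ⊕ Fin m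

variable {n m : ℕ}

theorem threeLayerLift_apply (p : EuclideanSpace ℝ (ThreeLayerIndex n m)) (i : Fin n) (j : Fin m) :
    threeLayerLift n m p i j =
      p (Sum.inl i) * p (Sum.inr (Sum.inl (i, j))) * p (Sum.inr (Sum.inr j)) := by
  simp [threeLayerLift, Matrix.mul_apply, Matrix.diagonal, Finset.sum_ite_eq]

theorem differentiable_threeLayerLift : Differentiable ℝ (threeLayerLift n m) := by
  have hcoord : ∀ k, Differentiable ℝ
      (fun p : EuclideanSpace ℝ (ThreeLayerIndex n m) => p k) :=
    fun k p => (PiLp.hasFDerivAt_apply 2 p k).differentiableAt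
  refine differentiable_pi.2 fun i => differentiable_pi.2 fun j => ?_
  simp only [threeLayerLift_apply]
  exact ((hcoord _).mul (hcoord _)).mul (hcoord _)

theorem threeLayerLift_diagExpScale {c : ThreeLayerIndex n m → ℝ}
    (hc : ∀ i j, c (Sum.inl i) + c (Sum.inr (Sum.inl (i, j))) + c (Sum.inr (Sum.inr j)) = 0)
    (s : ℝ) (p : EuclideanSpace ℝ (ThreeLayerIndex n m)) :
    threeLayerLift n m (diagExpScale c s p) = threeLayerLift n m p := by
  ext i j
  have hexp : Real.exp (c (Sum.inl i) * s) * Real.exp (c (Sum.inr (Sum.inl (i, j))) * s) *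
      Real.exp (c (Sum.inr (Sum.inr j)) * s) = 1 := by
    rw [← Real.exp_add, ← Real.exp_add, ← add_mul, ← add_mul, hc, zero_mul, Real.exp_zero]
  simp only [threeLayerLift_apply, diagExpScale]
  linear_combination
    (p (Sum.inl i) * p (Sum.inr (Sum.inl (i, j))) * p (Sum.inr (Sum.inr j))) * hexp

def rowWeight (i : Fin n) : ThreeLayerIndex n m → ℝ :=
  Sum.elim (fun i' => if i' = i then 1 else 0) (Sum.elim (fun q => if q.1 = i then -1 else 0) 0)

def colWeight (j : Fin m) : ThreeLayerIndex n m → ℝ :=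
  Sum.elim 0 (Sum.elim (fun q => if q.2 = j then -1 else 0) (fun j' => if j' = j then 1 else 0))

theorem rowWeight_add_add (i i' : Fin n) (j : Fin m) :
    rowWeight (m := m) i (Sum.inl i') + rowWeight i (Sum.inr (Sum.inl (i', j))) +
      rowWeight i (Sum.inr (Sum.inr j)) = 0 := by
  by_cases h : i' = i <;> simp [rowWeight, h]

theorem colWeight_add_add (j : Fin m) (i : Fin n) (j' : Fin m) :
    colWeight (n := n) j (Sum.inl i) + colWeight (n := n) j (Sum.inr (Sum.inl (i, j'))) +
      colWeight (n := n) j (Sum.inr (Sum.inr j')) = 0 := by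
  by_cases h : j' = j <;> simp [colWeight, h]

theorem sum_rowWeight_mul_sq (i : Fin n) (p : EuclideanSpace ℝ (ThreeLayerIndex n m)) :
    ∑ k, rowWeight i k * p k ^ 2 = p (Sum.inl i) ^ 2 - ∑ j, p (Sum.inr (Sum.inl (i, j))) ^ 2 := by
  simp only [rowWeight, Fintype.sum_sum_type, Fintype.sum_prod_type, Sum.elim_inl, Sum.elim_inr]
  simp [ite_mul, sub_eq_add_neg]

theorem sum_colWeight_mul_sq (j : Fin m) (p : EuclideanSpace ℝ (ThreeLayerIndex n m)) :
    ∑ k, colWeight j k * p k ^ 2 =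
      p (Sum.inr (Sum.inr j)) ^ 2 - ∑ i, p (Sum.inr (Sum.inl (i, j))) ^ 2 := by
  simp [colWeight, Fintype.sum_sum_type, Fintype.sum_prod_type, ite_mul, neg_add_eq_sub]

end ThreeLayer

theorem threeLayer_conservation_laws_general
    (n m : ℕ)
    (f : Matrix (Fin n) (Fin m) ℝ → ℝ) (hf : ContDiff ℝ 1 f)
    (T : ℝ)
    (θ : ℝ → EuclideanSpace ℝ (Fin n ⊕ (Fin n × Fin m) ⊕ Fin m))
    (hflow : ∀ t ∈ Set.Ico (0 : ℝ) T,
      HasDerivWithinAt θ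
        (-(gradient (fun p => f (threeLayerLift n m p)) (θ t)))
        (Set.Ico (0 : ℝ) T) t) :
    ∀ t ∈ Set.Ico (0 : ℝ) T,
      (∀ i : Fin n,
        (θ t (Sum.inl i)) ^ 2 - ∑ j, (θ t (Sum.inr (Sum.inl (i, j)))) ^ 2 =
        (θ 0 (Sum.inl i)) ^ 2 - ∑ j, (θ 0 (Sum.inr (Sum.inl (i, j)))) ^ 2) ∧
      (∀ j : Fin m,
        (θ t (Sum.inr (Sum.inr j))) ^ 2 - ∑ i, (θ t (Sum.inr (Sum.inl (i, j)))) ^ 2 =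
        (θ 0 (Sum.inr (Sum.inr j))) ^ 2 - ∑ i, (θ 0 (Sum.inr (Sum.inl (i, j)))) ^ 2) := by
  intro t ht
  have h0 : (0 : ℝ) ∈ Set.Ico 0 T := ⟨le_rfl, ht.1.trans_lt ht.2⟩
  have hg : Differentiable ℝ (fun p => f (threeLayerLift n m p)) :=
    (hf.differentiable one_ne_zero).comp differentiable_threeLayerLift
  have hconserved {c : ThreeLayerIndex n m → ℝ}
      (hc : ∀ i j, c (Sum.inl i) + c (Sum.inr (Sum.inl (i, j))) + c (Sum.inr (Sum.inr j)) = 0) :=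
    weighted_sq_sum_conserved_of_gradient_flow hg
      (fun s p => by rw [threeLayerLift_diagExpScale hc]) (convex_Ico 0 T) hflow h0 ht
  refine ⟨fun i => ?_, fun j => ?_⟩
  · simpa only [sum_rowWeight_mul_sq] using hconserved (rowWeight_add_add i)
  · simpa only [sum_colWeight_mul_sq] using hconserved (colWeight_add_add j)

/-- Along the gradient flow of `ℓ(u,V,w) = f(diag(u) V diag(w))`, the
quantities `u_i² − Σ_j V_{ij}²` and `w_j² − Σ_i V_{ij}²` are conserved. -/
theorem threeLayer_conservation_laws
    (n m : ℕ) (hn : 0 < n) (hm : 0 < m)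
    (f : Matrix (Fin n) (Fin m) ℝ → ℝ) (hf : ContDiff ℝ 1 f)
    (T : ℝ) (hT : 0 < T)
    (θ : ℝ → EuclideanSpace ℝ (Fin n ⊕ (Fin n × Fin m) ⊕ Fin m))
    (hflow : ∀ t ∈ Set.Ico (0 : ℝ) T,
      HasDerivWithinAt θ
        (-(gradient (fun p => f (threeLayerLift n m p)) (θ t)))
        (Set.Ico (0 : ℝ) T) t) :
    ∀ t ∈ Set.Ico (0 : ℝ) T,
      (∀ i : Fin n,
        (θ t (Sum.inl i)) ^ 2 - ∑ j, (θ t (Sum.inr (Sum.inl (i, j)))) ^ 2 =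
        (θ 0 (Sum.inl i)) ^ 2 - ∑ j, (θ 0 (Sum.inr (Sum.inl (i, j)))) ^ 2) ∧
      (∀ j : Fin m,
        (θ t (Sum.inr (Sum.inr j))) ^ 2 - ∑ i, (θ t (Sum.inr (Sum.inl (i, j)))) ^ 2 =
        (θ 0 (Sum.inr (Sum.inr j))) ^ 2 - ∑ i, (θ 0 (Sum.inr (Sum.inl (i, j)))) ^ 2) :=
  threeLayer_conservation_laws_general n m f hf T θ hflow
end

section
/- Let n, m, r be positive integers with r ≤ min(n, m), let U ∈ ℝ^{n×r} and V ∈ ℝ^{m×r} both have rank r, and suppose U^⊤U − V^⊤V = λ I_r for some λ ∈ ℝ. Set Z := U V^⊤ ∈ ℝ^{n×m}. Then: (a) P := U U^⊤ is positive semidefinite of rank r, commutes with Z Z^⊤, satisfies P² − λP = Z Z^⊤, and has the same column space (range) as Z Z^⊤; moreover P is the unique positive semidefinite matrix X ∈ ℝ^{n×n} with X² − λX = Z Z^⊤ and range(X) = range(Z Z^⊤). (b) Similarly, Q := V V^⊤ is positive semidefinite of rank r, satisfies Q² + λQ = Z^⊤ Z, has the same range as Z^⊤ Z, and is the unique positive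 semidefinite matrix X ∈ ℝ^{m×m} with X² + λX = Z^⊤ Z and range(X) = range(Z^⊤ Z). -/
/-!
Since `UᵀU = VᵀV + λ I` and both Gram matrices are invertible, `P = UUᵀ` satisfies
`P² − λP = U (VᵀV) Uᵀ = ZZᵀ` and has column space `range U = range (ZZᵀ)`.
For uniqueness, let `X ⪰ 0` solve `X² − λX = ZZᵀ` with `range X ⊆ range (ZZᵀ)`. For an eigenvalue
`x ≠ 0` of `X`, the eigenvector lies in `range (ZZᵀ)`, which meets `ker (ZZᵀ)` trivially, so the
eigenvalue `x² − λx` of `ZZᵀ` is positive. Hence `x` is the larger root of `t² − λt = x² − λx`,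
and `X` is the image of `ZZᵀ` under one fixed function in the functional calculus.
Part (b) is part (a) for `(V, U, −λ)`.
-/

open Matrix
open scoped MatrixOrder

namespace Matrix

variable {ι κ μ R : Type*} [Fintype κ] [Fintype μ]

section Field

variable [Field R]

theorem range_mulVecLin_eq_top_of_rank_eq {B : Matrix κ μ R} (hB : B.rank = Fintype.card κ) :
    LinearMap.range B.mulVecLin = ⊤ :=
  Submodule.eq_top_of_finrank_eq (by rwa [Module.finrank_fintype_fun_eq_card])

theorem range_mulVecLin_mul_of_rank_eq {A : Matrix ι κ R} {B : Matrix κ μ R}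
    (hB : B.rank = Fintype.card κ) :
    LinearMap.range (A * B).mulVecLin = LinearMap.range A.mulVecLin := by
  rw [mulVecLin_mul, LinearMap.range_comp_of_range_eq_top _ (range_mulVecLin_eq_top_of_rank_eq hB)]

theorem rank_mul_of_rank_eq {A : Matrix ι κ R} {B : Matrix κ μ R}
    (hB : B.rank = Fintype.card κ) : (A * B).rank = A.rank := by
  rw [rank, rank, range_mulVecLin_mul_of_rank_eq hB]

theorem exists_mulVec_eq_smul_of_mem_spectrum [Fintype ι] [DecidableEq ι] {A : Matrix ι ι R}
    {x : R} (hx : x ∈ spectrum R A) : ∃ v ≠ 0, A *ᵥ v = x • v := by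
  rw [← spectrum_toLin', ← Module.End.hasEigenvalue_iff_mem_spectrum] at hx
  obtain ⟨v, hv, hv0⟩ := hx.exists_hasEigenvector
  exact ⟨v, hv0, by simpa using Module.End.mem_eigenspace_iff.mp hv⟩

end Field

theorem eq_zero_of_mem_range_of_mulVec_eq_zero [Fintype ι] [CommRing R] [LinearOrder R]
    [IsStrictOrderedRing R] {S : Matrix ι ι R} (hS : S.IsSymm) {v : ι → R}
    (hv : v ∈ LinearMap.range S.mulVecLin) (h : S *ᵥ v = 0) : v = 0 := by
  obtain ⟨w, rfl⟩ := hv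
  rw [mulVecLin_apply] at h ⊢
  rw [← dotProduct_self_eq_zero, dotProduct_mulVec, ← hS.eq, vecMul_transpose, hS.eq, h,
    zero_dotProduct]

section Gram

variable [Fintype ι] {U : Matrix ι κ R} {V : Matrix μ κ R}

theorem sq_sub_smul_mul_transpose_self [DecidableEq ι] [DecidableEq κ] [CommRing R] {l : R}
    (hbal : Uᵀ * U - Vᵀ * V = l • 1) :
    (U * Uᵀ) ^ 2 - l • (U * Uᵀ) = U * Vᵀ * (U * Vᵀ)ᵀ := by
  rw [sub_eq_iff_eq_add] at hbal
  calc (U * Uᵀ) ^ 2 - l • (U * Uᵀ) = U * (Uᵀ * U) * Uᵀ - l • (U * Uᵀ) := by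
        simp only [sq, Matrix.mul_assoc]
    _ = U * Vᵀ * (U * Vᵀ)ᵀ := by
        simp [hbal, Matrix.add_mul, Matrix.mul_add, Matrix.mul_assoc]

theorem range_mul_transpose_self_eq [Field R] [LinearOrder R] [IsStrictOrderedRing R]
    (hU : U.rank = Fintype.card κ) (hV : V.rank = Fintype.card κ) :
    LinearMap.range (U * Uᵀ).mulVecLin = LinearMap.range (U * Vᵀ * (U * Vᵀ)ᵀ).mulVecLin := by
  have hUt : Uᵀ.rank = Fintype.card κ := (rank_transpose U).trans hU
  have hVVUt : (Vᵀ * V * Uᵀ).rank = Fintype.card κ := by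
    rw [rank_mul_of_rank_eq hUt, rank_transpose_mul_self, hV]
  rw [show U * Vᵀ * (U * Vᵀ)ᵀ = U * (Vᵀ * V * Uᵀ) by simp [Matrix.mul_assoc],
    range_mulVecLin_mul_of_rank_eq hUt, range_mulVecLin_mul_of_rank_eq hVVUt]

end Gram

end Matrix

/-- The inverse of `x ↦ x ^ 2 - l * x` on `{0} ∪ (max l 0, ∞)`. -/
noncomputable def largerRoot (l s : ℝ) : ℝ :=
  if s = 0 then 0 else (l + √(l ^ 2 + 4 * s)) / 2

theorem largerRoot_sq_sub_mul {l x : ℝ} (hx : 0 ≤ x) (hs : 0 ≤ x ^ 2 - l * x)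
    (h0 : x ≠ 0 → x ^ 2 - l * x ≠ 0) : largerRoot l (x ^ 2 - l * x) = x := by
  rcases eq_or_ne x 0 with rfl | hx0
  · simp [largerRoot]
  have hlx : l < x := by nlinarith [lt_of_le_of_ne hs (h0 hx0).symm]
  rw [largerRoot, if_neg (h0 hx0), show l ^ 2 + 4 * (x ^ 2 - l * x) = (2 * x - l) ^ 2 by ring,
    Real.sqrt_sq (by linarith)]
  ring

namespace Matrix

variable {ι : Type*} [Fintype ι] [DecidableEq ι]

theorem PosSemidef.eq_cfc_largerRoot {X S : Matrix ι ι ℝ} {l : ℝ} (hX : X.PosSemidef)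
    (hS : S.PosSemidef) (heq : X ^ 2 - l • X = S)
    (hrange : LinearMap.range X.mulVecLin ≤ LinearMap.range S.mulVecLin) :
    X = cfc (largerRoot l) S := by
  have hS_cfc : S = cfc (fun x => x ^ 2 - l * x) X := by
    rw [cfc_sub .., cfc_pow_id .., cfc_const_mul_id .., heq]
  have hspec : ∀ x ∈ spectrum ℝ X, largerRoot l (x ^ 2 - l * x) = x := by
    intro x hx
    refine largerRoot_sq_sub_mul (spectrum_nonneg_of_nonneg hX.nonneg hx)
      (spectrum_nonneg_of_nonneg hS.nonneg ?_) fun hx0 hzero => ?_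
    · rw [hS_cfc, cfc_map_spectrum ..]
      exact ⟨x, hx, rfl⟩
    obtain ⟨v, hv0, hv⟩ := exists_mulVec_eq_smul_of_mem_spectrum hx
    refine hv0 (eq_zero_of_mem_range_of_mulVec_eq_zero ?_ (hrange ⟨x⁻¹ • v, ?_⟩) ?_)
    · simpa using hS.isHermitian
    · simp [hv, hx0]
    · rw [← heq, sub_mulVec, sq, ← mulVec_mulVec, hv, mulVec_smul, hv, smul_mulVec, hv, smul_smul,
        smul_smul, ← sub_smul, ← sq, hzero, zero_smul]
  calc X = cfc id X := (cfc_id' ..).symm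
    _ = cfc (largerRoot l ∘ fun x => x ^ 2 - l * x) X := cfc_congr fun x hx => (hspec x hx).symm
    _ = cfc (largerRoot l) S := by
      rw [cfc_comp (largerRoot l) (fun x => x ^ 2 - l * x) X hX.isHermitian.isSelfAdjoint
        ((finite_real_spectrum.image _).continuousOn _), ← hS_cfc]

theorem PosSemidef.eq_of_sq_sub_smul_eq {X Y S : Matrix ι ι ℝ} {l : ℝ} (hX : X.PosSemidef)
    (hY : Y.PosSemidef) (hS : S.PosSemidef) (hXS : X ^ 2 - l • X = S) (hYS : Y ^ 2 - l • Y = S)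
    (hXr : LinearMap.range X.mulVecLin ≤ LinearMap.range S.mulVecLin)
    (hYr : LinearMap.range Y.mulVecLin ≤ LinearMap.range S.mulVecLin) : X = Y :=
  (hX.eq_cfc_largerRoot hS hXS hXr).trans (hY.eq_cfc_largerRoot hS hYS hYr).symm

end Matrix

theorem two_layer_relaxed_balanced_gram_characterization_general
    (n m r : ℕ)
    (U : Matrix (Fin n) (Fin r) ℝ) (V : Matrix (Fin m) (Fin r) ℝ)
    (hU : U.rank = r) (hV : V.rank = r)
    (l : ℝ) (hbal : Uᵀ * U - Vᵀ * V = l • (1 : Matrix (Fin r) (Fin r) ℝ)) :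
    -- (a) the matrix `P = U Uᵀ`
    ((U * Uᵀ).PosSemidef ∧ (U * Uᵀ).rank = r ∧
      (U * Uᵀ) * (U * Vᵀ * (U * Vᵀ)ᵀ) = (U * Vᵀ * (U * Vᵀ)ᵀ) * (U * Uᵀ) ∧
      (U * Uᵀ) ^ 2 - l • (U * Uᵀ) = U * Vᵀ * (U * Vᵀ)ᵀ ∧
      LinearMap.range (U * Uᵀ).mulVecLin =
        LinearMap.range (U * Vᵀ * (U * Vᵀ)ᵀ).mulVecLin ∧
      (∀ X : Matrix (Fin n) (Fin n) ℝ, X.PosSemidef →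
        X ^ 2 - l • X = U * Vᵀ * (U * Vᵀ)ᵀ →
        LinearMap.range X.mulVecLin =
          LinearMap.range (U * Vᵀ * (U * Vᵀ)ᵀ).mulVecLin →
        X = U * Uᵀ)) ∧
    -- (b) the matrix `Q = V Vᵀ`
    ((V * Vᵀ).PosSemidef ∧ (V * Vᵀ).rank = r ∧
      (V * Vᵀ) ^ 2 + l • (V * Vᵀ) = (U * Vᵀ)ᵀ * (U * Vᵀ) ∧
      LinearMap.range (V * Vᵀ).mulVecLin =
        LinearMap.range ((U * Vᵀ)ᵀ * (U * Vᵀ)).mulVecLin ∧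
      (∀ X : Matrix (Fin m) (Fin m) ℝ, X.PosSemidef →
        X ^ 2 + l • X = (U * Vᵀ)ᵀ * (U * Vᵀ) →
        LinearMap.range X.mulVecLin =
          LinearMap.range ((U * Vᵀ)ᵀ * (U * Vᵀ)).mulVecLin →
        X = V * Vᵀ)) := by
  have psd {j k : ℕ} (A : Matrix (Fin j) (Fin k) ℝ) : (A * Aᵀ).PosSemidef := by
    simpa using posSemidef_self_mul_conjTranspose A
  have hU' : U.rank = Fintype.card (Fin r) := by rw [hU, Fintype.card_fin]
  have hV' : V.rank = Fintype.card (Fin r) := by rw [hV, Fintype.card_fin]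
  have hbal' : Vᵀ * V - Uᵀ * U = (-l) • 1 := by rw [neg_smul, ← hbal, neg_sub]
  have hZ : V * Uᵀ * (V * Uᵀ)ᵀ = (U * Vᵀ)ᵀ * (U * Vᵀ) := by simp [Matrix.mul_assoc]
  have eqP := sq_sub_smul_mul_transpose_self hbal
  have eqQ := hZ ▸ sq_sub_smul_mul_transpose_self hbal'
  have rangeP := range_mul_transpose_self_eq hU' hV'
  have rangeQ := hZ ▸ range_mul_transpose_self_eq hV' hU'
  have psdZtZ : ((U * Vᵀ)ᵀ * (U * Vᵀ)).PosSemidef := hZ ▸ psd (V * Uᵀ)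
  refine ⟨⟨psd U, by rw [rank_self_mul_transpose, hU], ?_, eqP, rangeP,
    fun X hX hXeq hXr => hX.eq_of_sq_sub_smul_eq (psd U) (psd _) hXeq eqP hXr.le rangeP.le⟩,
    ⟨psd V, by rw [rank_self_mul_transpose, hV], by simpa using eqQ, rangeQ,
    fun X hX hXeq hXr => hX.eq_of_sq_sub_smul_eq (psd V) psdZtZ (by simpa using hXeq) eqQ
      hXr.le rangeQ.le⟩⟩
  rw [← eqP]
  exact ((Commute.refl _).pow_right 2).sub_right ((Commute.refl _).smul_right l)

/-- For a relaxed-balanced full-rank two-layer factorization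
`Z = U Vᵀ` with `UᵀU − VᵀV = λ I_r` and `r ≤ min(n,m)`:
`P = U Uᵀ` is the unique positive semidefinite solution of `X² − λX = Z Zᵀ` with
`range X = range (Z Zᵀ)` (and it has rank `r` and commutes with `Z Zᵀ`);
similarly `Q = V Vᵀ` is the unique positive semidefinite solution of `X² + λX = Zᵀ Z`
with `range X = range (Zᵀ Z)`. -/
theorem two_layer_relaxed_balanced_gram_characterization
    (n m r : ℕ) (hn : 0 < n) (hm : 0 < m) (hr : 0 < r)
    (hrn : r ≤ n) (hrm : r ≤ m)
    (U : Matrix (Fin n) (Fin r) ℝ) (V : Matrix (Fin m) (Fin r) ℝ)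
    (hU : U.rank = r) (hV : V.rank = r)
    (l : ℝ) (hbal : Uᵀ * U - Vᵀ * V = l • (1 : Matrix (Fin r) (Fin r) ℝ)) :
    -- (a) the matrix `P = U Uᵀ`
    ((U * Uᵀ).PosSemidef ∧ (U * Uᵀ).rank = r ∧
      (U * Uᵀ) * (U * Vᵀ * (U * Vᵀ)ᵀ) = (U * Vᵀ * (U * Vᵀ)ᵀ) * (U * Uᵀ) ∧
      (U * Uᵀ) ^ 2 - l • (U * Uᵀ) = U * Vᵀ * (U * Vᵀ)ᵀ ∧
      LinearMap.range (U * Uᵀ).mulVecLin =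
        LinearMap.range (U * Vᵀ * (U * Vᵀ)ᵀ).mulVecLin ∧
      (∀ X : Matrix (Fin n) (Fin n) ℝ, X.PosSemidef →
        X ^ 2 - l • X = U * Vᵀ * (U * Vᵀ)ᵀ →
        LinearMap.range X.mulVecLin =
          LinearMap.range (U * Vᵀ * (U * Vᵀ)ᵀ).mulVecLin →
        X = U * Uᵀ)) ∧
    -- (b) the matrix `Q = V Vᵀ`
    ((V * Vᵀ).PosSemidef ∧ (V * Vᵀ).rank = r ∧
      (V * Vᵀ) ^ 2 + l • (V * Vᵀ) = (U * Vᵀ)ᵀ * (U * Vᵀ) ∧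
      LinearMap.range (V * Vᵀ).mulVecLin =
        LinearMap.range ((U * Vᵀ)ᵀ * (U * Vᵀ)).mulVecLin ∧
      (∀ X : Matrix (Fin m) (Fin m) ℝ, X.PosSemidef →
        X ^ 2 + l • X = (U * Vᵀ)ᵀ * (U * Vᵀ) →
        LinearMap.range X.mulVecLin =
          LinearMap.range ((U * Vᵀ)ᵀ * (U * Vᵀ)).mulVecLin →
        X = V * Vᵀ)) :=
  two_layer_relaxed_balanced_gram_characterization_general n m r U V hU hV l hbal
end

section
/- Let L ≥ 2 and let U_1, …, U_L ∈ ℝ^{n×n} satisfy U_{i+1}^⊤ U_{i+1} − U_i U_i^⊤ = λ_i I_n for i = 1, …, L−1, for some real numbers λ_1, …, λ_{L−1}. Define a_k := Σ_{i=1}^k λ_{L−i} for k = 1, …, L−1. Then every eigenvalue of the positive semidefinite matrix U_L U_L^⊤ is greater than or equal to max(0, a_1, …, a_{L−1}). -/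
/-!
Since `UUᵀ` and `UᵀU` have the same spectrum, the relaxed balanced condition
`U_{i+1}ᵀU_{i+1} = U_iU_iᵀ + λ_i I` shifts the spectrum of `U_{i+1}U_{i+1}ᵀ` down by `λ_i` onto
that of `U_iU_iᵀ`. Descending from layer `L` to layer `L - k`, every eigenvalue `μ` of `U_LU_Lᵀ`
yields the eigenvalue `μ - a_k` of the positive semidefinite matrix `U_{L-k}U_{L-k}ᵀ`, so
`a_k ≤ μ`; the case `k = 0` is `0 ≤ μ`.
-/

open Matrix

namespace Matrix

variable {ι K : Type*} [Fintype ι] [DecidableEq ι] [Field K]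

theorem spectrum_mul_comm (A B : Matrix ι ι K) : spectrum K (A * B) = spectrum K (B * A) := by
  ext μ
  simp only [mem_spectrum_iff_isRoot_charpoly, charpoly_mul_comm]

theorem sub_mem_spectrum_mul_transpose_of_transpose_mul_sub_eq {A B : Matrix ι ι K} {c μ : K}
    (h : Bᵀ * B - A * Aᵀ = c • 1) (hμ : μ ∈ spectrum K (B * Bᵀ)) :
    μ - c ∈ spectrum K (A * Aᵀ) := by
  have hB : Bᵀ * B = algebraMap K _ c + A * Aᵀ := by
    rw [Algebra.algebraMap_eq_smul_one, ← h, sub_add_cancel]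
  rwa [spectrum_mul_comm, hB, ← sub_add_cancel μ c, spectrum.add_mem_add_iff] at hμ

theorem nonneg_of_mem_spectrum_mul_transpose_self {A : Matrix ι ι ℝ} {μ : ℝ}
    (hμ : μ ∈ spectrum ℝ (A * Aᵀ)) : 0 ≤ μ := by
  have hpsd : (A * Aᴴ).PosSemidef := posSemidef_self_mul_conjTranspose A
  rw [conjTranspose_eq_transpose_of_trivial] at hpsd
  exact (posSemidef_iff_isHermitian_and_spectrum_nonneg.mp hpsd).2 hμ

end Matrix

theorem sub_sum_mem_spectrum_of_relaxed_balanced {ι : Type*} [Fintype ι] [DecidableEq ι]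
    {L : ℕ} {U : ℕ → Matrix ι ι ℝ} {lam : ℕ → ℝ}
    (hbal : ∀ i, 1 ≤ i → i ≤ L - 1 → (U (i + 1))ᵀ * U (i + 1) - U i * (U i)ᵀ = lam i • 1)
    {μ : ℝ} (hμ : μ ∈ spectrum ℝ (U L * (U L)ᵀ)) :
    ∀ k < L, μ - ∑ i ∈ Finset.Icc 1 k, lam (L - i) ∈ spectrum ℝ (U (L - k) * (U (L - k))ᵀ)
  | 0, _ => by simpa using hμ
  | k + 1, hk => by
    have ih := sub_sum_mem_spectrum_of_relaxed_balanced hbal hμ k (by omega)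
    rw [show L - k = L - (k + 1) + 1 by omega] at ih
    rw [Finset.sum_Icc_succ_top (by omega), ← sub_sub]
    exact sub_mem_spectrum_mul_transpose_of_transpose_mul_sub_eq
      (hbal (L - (k + 1)) (by omega) (by omega)) ih

/-- Under the relaxed balanced conditions
`U_{i+1}ᵀ U_{i+1} − U_i U_iᵀ = λ_i I_n` (for `i = 1, …, L−1`), every eigenvalue of the
positive semidefinite matrix `U_L U_Lᵀ` is at least `max(0, a_1, …, a_{L−1})` where
`a_k = Σ_{i=1}^k λ_{L−i}`. -/
theorem deep_linear_relaxed_balanced_spectrum_lower_bound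
    (n L : ℕ) (hL : 2 ≤ L)
    (U : ℕ → Matrix (Fin n) (Fin n) ℝ) (lam : ℕ → ℝ)
    (hbal : ∀ i, 1 ≤ i → i ≤ L - 1 →
      (U (i + 1))ᵀ * U (i + 1) - U i * (U i)ᵀ =
        lam i • (1 : Matrix (Fin n) (Fin n) ℝ)) :
    ∀ μ ∈ spectrum ℝ (U L * (U L)ᵀ),
      (Finset.range L).sup' (Finset.nonempty_range_iff.mpr (by omega))
        (fun k => ∑ i ∈ Finset.Icc 1 k, lam (L - i)) ≤ μ := by
  intro μ hμ
  refine Finset.sup'_le _ _ fun k hk => ?_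
  have := nonneg_of_mem_spectrum_mul_transpose_self
    (sub_sum_mem_spectrum_of_relaxed_balanced hbal hμ k (Finset.mem_range.mp hk))
  linarith
end

section
/- Let n, m, r be positive integers, and for (U, V) ∈ ℝ^{n×r} × ℝ^{m×r} define M(U, V) := I_m ⊗ (U U^⊤) + (V V^⊤) ⊗ I_n ∈ ℝ^{nm×nm}, where ⊗ denotes the Kronecker product. Then M is differentiable, its derivative at (U, V) in direction (H, K) ∈ ℝ^{n×r} × ℝ^{m×r} equals I_m ⊗ (U H^⊤ + H U^⊤) + (V K^⊤ + K V^⊤) ⊗ I_n, and this derivative vanishes if and only if there exists μ ∈ ℝ such that U H^⊤ + H U^⊤ = μ I_n and V K^⊤ + K V^⊤ = −μ I_m. -/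
open Matrix Kronecker

attribute [local instance] Matrix.normedAddCommGroup Matrix.normedSpace

/-- The metric `M(U, V) := I_m ⊗ (U Uᵀ) + (V Vᵀ) ⊗ I_n` of the two-layer linear
factorization `φ(U,V) = U Vᵀ`. -/
noncomputable def twoLayerMetric (n m r : ℕ)
    (p : Matrix (Fin n) (Fin r) ℝ × Matrix (Fin m) (Fin r) ℝ) :
    Matrix (Fin m × Fin n) (Fin m × Fin n) ℝ :=
  (1 : Matrix (Fin m) (Fin m) ℝ) ⊗ₖ (p.1 * p.1ᵀ) +
    (p.2 * p.2ᵀ) ⊗ₖ (1 : Matrix (Fin n) (Fin n) ℝ)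

/-!
`Y ↦ Y Yᵀ` is the matrix product evaluated along `Y ↦ (Y, Yᵀ)`, so the product rule
gives the derivative `H ↦ X Hᵀ + H Xᵀ`, and `A ↦ I ⊗ A`, `B ↦ B ⊗ I` are linear.
For the kernel, the `((i, a), (j, b))` entry of `I ⊗ A + B ⊗ I` is `δᵢⱼ A_ab + B_ij δ_ab`:
the off-diagonal entries force `A` and `B` to be diagonal, and the diagonal ones give
`A_aa + B_ii = 0` for all `a`, `i`.
-/

namespace Matrix

theorem one_kronecker_add_kronecker_one_eq_zero_iff {ι κ R : Type*} [CommRing R]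
    [DecidableEq ι] [DecidableEq κ] [Nonempty ι] [Nonempty κ]
    (A : Matrix ι ι R) (B : Matrix κ κ R) :
    (1 : Matrix κ κ R) ⊗ₖ A + B ⊗ₖ (1 : Matrix ι ι R) = 0 ↔
      ∃ μ : R, A = μ • (1 : Matrix ι ι R) ∧ B = -μ • (1 : Matrix κ κ R) := by
  constructor
  · intro h
    have entry : ∀ i j a b,
        (1 : Matrix κ κ R) i j * A a b + B i j * (1 : Matrix ι ι R) a b = 0 :=
      fun i j a b => by simpa using congrFun (congrFun h (i, a)) (j, b)
    obtain ⟨a₀⟩ := ‹Nonempty ι›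
    obtain ⟨i₀⟩ := ‹Nonempty κ›
    refine ⟨A a₀ a₀, ?_, ?_⟩
    · ext a b
      have h₁ := entry i₀ i₀ a b
      have h₂ := entry i₀ i₀ a₀ a₀
      by_cases hab : a = b
      · subst hab
        simp only [one_apply_eq, one_mul, mul_one, smul_apply, smul_eq_mul] at h₁ h₂ ⊢
        linear_combination h₁ - h₂
      · simpa [one_apply, hab] using h₁
    · ext i j
      have h₁ := entry i j a₀ a₀
      by_cases hij : i = j
      · subst hij
        simp only [one_apply_eq, one_mul, mul_one, smul_apply, smul_eq_mul] at h₁ ⊢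
        linear_combination h₁
      · simpa [one_apply, hij] using h₁
  · rintro ⟨μ, rfl, rfl⟩
    rw [kronecker_smul, smul_kronecker, one_kronecker_one, ← add_smul, add_neg_cancel, zero_smul]

variable {ι κ : Type*} [Fintype ι] [Fintype κ]

noncomputable def mulTransposeDeriv (X : Matrix ι κ ℝ) :
    Matrix ι κ ℝ →L[ℝ] Matrix ι ι ℝ :=
  LinearMap.toContinuousLinearMap
    { toFun := fun H => X * Hᵀ + H * Xᵀ
      map_add' := fun H K => by
        simp only [transpose_add, Matrix.mul_add, Matrix.add_mul]; abel
      map_smul' := fun c H => by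
        simp only [transpose_smul, Matrix.mul_smul, Matrix.smul_mul, smul_add, RingHom.id_apply] }

theorem hasFDerivAt_mul_transpose (X : Matrix ι κ ℝ) :
    HasFDerivAt (fun Y : Matrix ι κ ℝ => Y * Yᵀ) (mulTransposeDeriv X) X := by
  have hT := (transposeLinearEquiv ι κ ℝ ℝ).toLinearMap.toContinuousLinearMap.hasFDerivAt
    (x := X)
  refine ((mulLinearMap ℝ (A := ℝ) (l := ι) (m := κ) (n := ι)).toContinuousBilinearMap
    |>.hasFDerivAt_of_bilinear (hasFDerivAt_id X) hT).congr_fderiv ?_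
  ext H : 1
  rfl

noncomputable def kroneckerCLM {ι' κ' : Type*} [Fintype ι'] [Fintype κ'] :
    Matrix ι ι' ℝ →L[ℝ] Matrix κ κ' ℝ →L[ℝ] Matrix (ι × κ) (ι' × κ') ℝ :=
  kroneckerBilinear.toContinuousBilinearMap

end Matrix

theorem hasFDerivAt_twoLayerMetric (n m r : ℕ) (U : Matrix (Fin n) (Fin r) ℝ)
    (V : Matrix (Fin m) (Fin r) ℝ) :
    HasFDerivAt (twoLayerMetric n m r)
      (kroneckerCLM (1 : Matrix (Fin m) (Fin m) ℝ) ∘L mulTransposeDeriv U ∘L .fst ℝ _ _ +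
        (kroneckerCLM (ι := Fin m) (κ := Fin n)).flip 1 ∘L
          mulTransposeDeriv V ∘L .snd ℝ _ _)
      (U, V) := by
  have hU := (hasFDerivAt_mul_transpose U).comp (U, V)
    (hasFDerivAt_fst (𝕜 := ℝ) (F := Matrix (Fin m) (Fin r) ℝ))
  have hV := (hasFDerivAt_mul_transpose V).comp (U, V)
    (hasFDerivAt_snd (𝕜 := ℝ) (E := Matrix (Fin n) (Fin r) ℝ))
  exact ((kroneckerCLM _).hasFDerivAt.comp _ hU).add
    (((kroneckerCLM (ι := Fin m) (ι' := Fin m) (κ := Fin n) (κ' := Fin n)).flip 1).hasFDerivAt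
      |>.comp _ hV)

theorem twoLayerMetric_derivative_general
    (n m r : ℕ) (hn : 0 < n) (hm : 0 < m) :
    Differentiable ℝ (twoLayerMetric n m r) ∧
    ∀ (U : Matrix (Fin n) (Fin r) ℝ) (V : Matrix (Fin m) (Fin r) ℝ)
      (H : Matrix (Fin n) (Fin r) ℝ) (K : Matrix (Fin m) (Fin r) ℝ),
      fderiv ℝ (twoLayerMetric n m r) (U, V) (H, K) =
        (1 : Matrix (Fin m) (Fin m) ℝ) ⊗ₖ (U * Hᵀ + H * Uᵀ) +
          (V * Kᵀ + K * Vᵀ) ⊗ₖ (1 : Matrix (Fin n) (Fin n) ℝ) ∧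
      (fderiv ℝ (twoLayerMetric n m r) (U, V) (H, K) = 0 ↔
        ∃ μ : ℝ, U * Hᵀ + H * Uᵀ = μ • (1 : Matrix (Fin n) (Fin n) ℝ) ∧
          V * Kᵀ + K * Vᵀ = -μ • (1 : Matrix (Fin m) (Fin m) ℝ)) := by
  refine ⟨fun p => (hasFDerivAt_twoLayerMetric n m r p.1 p.2).differentiableAt, ?_⟩
  intro U V H K
  have hderiv : fderiv ℝ (twoLayerMetric n m r) (U, V) (H, K) =
      (1 : Matrix (Fin m) (Fin m) ℝ) ⊗ₖ (U * Hᵀ + H * Uᵀ) +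
        (V * Kᵀ + K * Vᵀ) ⊗ₖ (1 : Matrix (Fin n) (Fin n) ℝ) := by
    rw [(hasFDerivAt_twoLayerMetric n m r U V).fderiv]; rfl
  have : Nonempty (Fin n) := ⟨⟨0, hn⟩⟩
  have : Nonempty (Fin m) := ⟨⟨0, hm⟩⟩
  exact ⟨hderiv, hderiv ▸ one_kronecker_add_kronecker_one_eq_zero_iff _ _⟩

/-- The map `M(U,V) = I_m ⊗ (U Uᵀ) + (V Vᵀ) ⊗ I_n` is differentiable,
its derivative at `(U,V)` in direction `(H,K)` is
`I_m ⊗ (U Hᵀ + H Uᵀ) + (V Kᵀ + K Vᵀ) ⊗ I_n`, and this derivative vanishes iff there is a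
`μ ∈ ℝ` with `U Hᵀ + H Uᵀ = μ I_n` and `V Kᵀ + K Vᵀ = −μ I_m`. -/
theorem twoLayerMetric_derivative
    (n m r : ℕ) (hn : 0 < n) (hm : 0 < m) (hr : 0 < r) :
    Differentiable ℝ (twoLayerMetric n m r) ∧
    ∀ (U : Matrix (Fin n) (Fin r) ℝ) (V : Matrix (Fin m) (Fin r) ℝ)
      (H : Matrix (Fin n) (Fin r) ℝ) (K : Matrix (Fin m) (Fin r) ℝ),
      fderiv ℝ (twoLayerMetric n m r) (U, V) (H, K) =
        (1 : Matrix (Fin m) (Fin m) ℝ) ⊗ₖ (U * Hᵀ + H * Uᵀ) +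
          (V * Kᵀ + K * Vᵀ) ⊗ₖ (1 : Matrix (Fin n) (Fin n) ℝ) ∧
      (fderiv ℝ (twoLayerMetric n m r) (U, V) (H, K) = 0 ↔
        ∃ μ : ℝ, U * Hᵀ + H * Uᵀ = μ • (1 : Matrix (Fin n) (Fin n) ℝ) ∧
          V * Kᵀ + K * Vᵀ = -μ • (1 : Matrix (Fin m) (Fin m) ℝ)) :=
  twoLayerMetric_derivative_general n m r hn hm
end
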